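/- arXiv:math/0304339 — 4 statements merged into one kernel-verified Lean document; each statement's English description precedes it below -/
import Mathlib

section
/- Let (A, τ) be a noncommutative probability space. There exists a unique family (R⁽ⁿ⁾)_{n≥1}, where each R⁽ⁿ⁾ : Aⁿ → ℂ is an n-multilinear functional, such that for every n ≥ 1 and all a₁, …, a_n ∈ A one has τ(a₁⋯a_n) = Σ_{π ∈ NC(n)} Π_{V ∈ π} R^{(|V|)}(a_{j₁}, …, a_{j_k}), where the product runs over the blocks V = {j₁ < j₂ < … < j_k} of the noncrossing partition π. -/
/-!
The term of the one-block partition `{univ}` in the moment–cumulant relation is `R⁽ⁿ⁾(a₁, …, aₙ)`,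
and every other noncrossing partition of `{1, …, n}` has only blocks of size `< n`. The relation
is therefore a triangular system: it determines `R⁽ⁿ⁾` from the `R⁽ᵐ⁾` with `m < n` (uniqueness),
and read as a recursion it defines the cumulants (existence). The recursively defined `R⁽ⁿ⁾` is
multilinear because each term it subtracts is a product of multilinear functionals in the
variables of pairwise disjoint blocks.
-/

open scoped Classical

/-- `π` is a partition of `{1, …, n}` (modelled as `Fin n`): the blocks are nonempty and
every point belongs to exactly one block. -/
def IsPartition {n : ℕ} (π : Finset (Finset (Fin n))) : Prop :=
  (∀ B ∈ π, B.Nonempty) ∧ ∀ i : Fin n, ∃! B : Finset (Fin n), B ∈ π ∧ i ∈ B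

/-- A partition of `{1, …, n}` is noncrossing if there is no quadruple `i < j < k < l`
with `i, k` in one block and `j, l` in a different block. -/
def IsNoncrossing {n : ℕ} (π : Finset (Finset (Fin n))) : Prop :=
  ¬ ∃ i j k l : Fin n, i < j ∧ j < k ∧ k < l ∧
      ∃ B ∈ π, ∃ B' ∈ π, B ≠ B' ∧ i ∈ B ∧ k ∈ B ∧ j ∈ B' ∧ l ∈ B'

/-- `NC n`: the (finite) set of noncrossing partitions of `{1, …, n}`. -/
noncomputable def NC (n : ℕ) : Finset (Finset (Finset (Fin n))) :=
  Finset.univ.filter fun π => IsPartition π ∧ IsNoncrossing π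

/-- The term `Π_{V ∈ π} R^{(|V|)}(a_{j₁}, …, a_{j_k})` associated to a partition `π`,
where each block `V = {j₁ < … < j_k}` is listed in increasing order. -/
noncomputable def cumulantTerm {A : Type*} [Ring A] [Algebra ℂ A]
    (R : ∀ m : ℕ, MultilinearMap ℂ (fun _ : Fin m => A) ℂ)
    {n : ℕ} (π : Finset (Finset (Fin n))) (a : Fin n → A) : ℂ :=
  ∏ B ∈ π, R B.card fun i => a (B.orderIsoOfFin rfl i).1

/-- The moment–cumulant relation: for every `n ≥ 1` and `a₁, …, a_n ∈ A`,
`τ(a₁ ⋯ a_n) = Σ_{π ∈ NC(n)} Π_{V ∈ π} R^{(|V|)}(a_V)`. -/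
def MomentCumulant {A : Type*} [Ring A] [Algebra ℂ A] (τ : A →ₗ[ℂ] ℂ)
    (R : ∀ m : ℕ, MultilinearMap ℂ (fun _ : Fin m => A) ℂ) : Prop :=
  ∀ n : ℕ, 0 < n → ∀ a : Fin n → A,
    τ (List.ofFn a).prod = ∑ π ∈ NC n, cumulantTerm R π a

open Finset Function

section Partitions

variable {n : ℕ} {π : Finset (Finset (Fin n))}

lemma IsPartition.eq_of_mem (hπ : IsPartition π) {B B' : Finset (Fin n)} (hB : B ∈ π)
    (hB' : B' ∈ π) {i : Fin n} (hi : i ∈ B) (hi' : i ∈ B') : B = B' :=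
  (hπ.2 i).unique ⟨hB, hi⟩ ⟨hB', hi'⟩

lemma IsPartition.card_lt (hπ : IsPartition π) (hne : π ≠ {univ}) {B : Finset (Fin n)}
    (hB : B ∈ π) : B.card < n := by
  refine ((card_le_univ B).trans_eq (Fintype.card_fin n)).lt_of_ne fun hcard => hne ?_
  have hBu : B = univ := eq_univ_of_card B (hcard.trans (Fintype.card_fin n).symm)
  refine eq_singleton_iff_unique_mem.2 ⟨hBu ▸ hB, fun B' hB' => ?_⟩
  obtain ⟨i, hi⟩ := hπ.1 B' hB'
  exact hBu ▸ hπ.eq_of_mem hB' hB hi (hBu ▸ mem_univ i)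

lemma IsPartition.exists_orderEmbOfFin_eq (hπ : IsPartition π) (j : Fin n) :
    ∃ B ∈ π, ∃ i : Fin B.card, B.orderEmbOfFin rfl i = j := by
  obtain ⟨B, ⟨hB, hj⟩, -⟩ := hπ.2 j
  exact ⟨B, hB, by rwa [← mem_coe, ← range_orderEmbOfFin B rfl] at hj⟩

lemma isPartition_of_mem_NC (h : π ∈ NC n) : IsPartition π := (mem_filter.1 h).2.1

lemma singleton_univ_mem_NC (hn : 0 < n) : {univ} ∈ NC n := by
  refine mem_filter.2 ⟨mem_univ _, ⟨fun B hB => ?_, fun i => ?_⟩, ?_⟩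
  · rw [mem_singleton.1 hB]
    exact univ_nonempty_iff.2 ⟨⟨0, hn⟩⟩
  · exact ⟨univ, by simp, fun B hB => mem_singleton.1 hB.1⟩
  · rintro ⟨i, j, k, l, -, -, -, B, hB, B', hB', hne, -⟩
    exact hne ((mem_singleton.1 hB).trans (mem_singleton.1 hB').symm)

end Partitions

section BlockProd

variable {R M : Type*} [CommSemiring R] [AddCommMonoid M] [Module R M]
  {n : ℕ} {π : Finset (Finset (Fin n))}

lemma prod_update_comp_orderEmbOfFin [DecidableEq (Fin n)] (hπ : IsPartition π)
    (F : ∀ B ∈ π, MultilinearMap R (fun _ : Fin B.card => M) R) (a : Fin n → M)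
    {B₀ : Finset (Fin n)} (hB₀ : B₀ ∈ π) (i₀ : Fin B₀.card) (v : M) :
    ∏ B ∈ π.attach, F B.1 B.2 (update a (B₀.orderEmbOfFin rfl i₀) v ∘ B.1.orderEmbOfFin rfl) =
      F B₀ hB₀ (update (a ∘ B₀.orderEmbOfFin rfl) i₀ v) *
        ∏ B ∈ π.attach.erase ⟨B₀, hB₀⟩, F B.1 B.2 (a ∘ B.1.orderEmbOfFin rfl) := by
  rw [← mul_prod_erase _ _ (mem_attach _ ⟨B₀, hB₀⟩),
    update_comp_eq_of_injective _ (B₀.orderEmbOfFin rfl).injective]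
  congr 1
  refine prod_congr rfl fun B hB => ?_
  have hj : B₀.orderEmbOfFin rfl i₀ ∉ Set.range (B.1.orderEmbOfFin rfl) := by
    rw [range_orderEmbOfFin]
    intro hj
    exact ne_of_mem_erase hB
      (Subtype.ext (hπ.eq_of_mem B.2 hB₀ hj (orderEmbOfFin_mem B₀ rfl i₀)))
  rw [update_comp_eq_of_notMem_range _ _ hj]

noncomputable def blockProd (hπ : IsPartition π)
    (F : ∀ B ∈ π, MultilinearMap R (fun _ : Fin B.card => M) R) :
    MultilinearMap R (fun _ : Fin n => M) R where
  toFun a := ∏ B ∈ π.attach, F B.1 B.2 (a ∘ B.1.orderEmbOfFin rfl)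
  map_update_add' a j x y := by
    obtain ⟨B₀, hB₀, i₀, rfl⟩ := hπ.exists_orderEmbOfFin_eq j
    simp only [prod_update_comp_orderEmbOfFin hπ F a hB₀, MultilinearMap.map_update_add, add_mul]
  map_update_smul' a j c x := by
    obtain ⟨B₀, hB₀, i₀, rfl⟩ := hπ.exists_orderEmbOfFin_eq j
    simp only [prod_update_comp_orderEmbOfFin hπ F a hB₀, MultilinearMap.map_update_smul,
      smul_eq_mul, mul_assoc]

lemma blockProd_apply (hπ : IsPartition π)
    (F : ∀ B ∈ π, MultilinearMap R (fun _ : Fin B.card => M) R) (a : Fin n → M) :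
    blockProd hπ F a = ∏ B ∈ π.attach, F B.1 B.2 (a ∘ B.1.orderEmbOfFin rfl) := rfl

end BlockProd

section Cumulants

variable {A : Type*} [Ring A] [Algebra ℂ A] {n : ℕ}

noncomputable def freeCumulant (τ : A →ₗ[ℂ] ℂ) (n : ℕ) :
    MultilinearMap ℂ (fun _ : Fin n => A) ℂ :=
  τ.compMultilinearMap (MultilinearMap.mkPiAlgebraFin ℂ n A) -
    ∑ π ∈ ((NC n).erase {univ}).attach,
      blockProd (isPartition_of_mem_NC (mem_of_mem_erase π.2)) fun B _ => freeCumulant τ B.card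
termination_by n
decreasing_by
  exact (isPartition_of_mem_NC (mem_of_mem_erase π.2)).card_lt (ne_of_mem_erase π.2) ‹_›

lemma freeCumulant_apply (τ : A →ₗ[ℂ] ℂ) (a : Fin n → A) :
    freeCumulant τ n a = τ (List.ofFn a).prod -
      ∑ π ∈ (NC n).erase {univ}, cumulantTerm (freeCumulant τ) π a := by
  rw [freeCumulant]
  simp only [sub_apply, _root_.sum_apply, blockProd_apply, LinearMap.compMultilinearMap_apply,
    MultilinearMap.mkPiAlgebraFin_apply, cumulantTerm, coe_orderIsoOfFin_apply, comp_def]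
  congr 1
  rw [← sum_attach ((NC n).erase {univ})]
  exact sum_congr rfl fun _ _ =>
    prod_attach _ fun B : Finset (Fin n) => freeCumulant τ B.card fun i => a (B.orderEmbOfFin rfl i)

lemma orderIsoOfFin_univ_apply (h : (univ : Finset (Fin n)).card = n) (i : Fin n) :
    ((univ : Finset (Fin n)).orderIsoOfFin h i : Fin n) = i := by
  rw [coe_orderIsoOfFin_apply, ← orderEmbOfFin_unique h (f := id) (fun _ => mem_univ _)
    strictMono_id, id]

lemma cumulantTerm_singleton_univ (F : ∀ m : ℕ, MultilinearMap ℂ (fun _ : Fin m => A) ℂ)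
    (a : Fin n → A) : cumulantTerm F {univ} a = F n a := by
  -- `univ.card` is only propositionally equal to `n`, so the arity has to be transported.
  have hcast : ∀ k (h : (univ : Finset (Fin n)).card = k), k = n →
      F k (fun i => a (univ.orderIsoOfFin h i)) = F n a := by
    rintro k h rfl
    simp only [orderIsoOfFin_univ_apply]
  exact (prod_singleton _ _).trans (hcast _ rfl (card_fin n))

lemma sum_NC_cumulantTerm (F : ∀ m : ℕ, MultilinearMap ℂ (fun _ : Fin m => A) ℂ)
    (hn : 0 < n) (a : Fin n → A) :
    ∑ π ∈ NC n, cumulantTerm F π a = F n a + ∑ π ∈ (NC n).erase {univ}, cumulantTerm F π a := by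
  rw [← add_sum_erase _ _ (singleton_univ_mem_NC hn), cumulantTerm_singleton_univ]

lemma momentCumulant_freeCumulant (τ : A →ₗ[ℂ] ℂ) : MomentCumulant τ (freeCumulant τ) := by
  intro n hn a
  rw [sum_NC_cumulantTerm _ hn, freeCumulant_apply]
  ring

lemma cumulantTerm_congr_of_ne_singleton_univ
    {F G : ∀ m : ℕ, MultilinearMap ℂ (fun _ : Fin m => A) ℂ}
    (hFG : ∀ m, 0 < m → m < n → F m = G m) {π : Finset (Finset (Fin n))} (hπ : IsPartition π)
    (hne : π ≠ {univ}) (a : Fin n → A) : cumulantTerm F π a = cumulantTerm G π a :=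
  prod_congr rfl fun B hB => by rw [hFG _ (card_pos.2 (hπ.1 B hB)) (hπ.card_lt hne hB)]

lemma MomentCumulant.unique {τ : A →ₗ[ℂ] ℂ} {F G : ∀ m : ℕ, MultilinearMap ℂ (fun _ : Fin m => A) ℂ}
    (hF : MomentCumulant τ F) (hG : MomentCumulant τ G) (hn : 0 < n) : F n = G n := by
  induction n using Nat.strong_induction_on with
  | _ n ih =>
    ext a
    have hFn := hF n hn a
    have hGn := hG n hn a
    rw [sum_NC_cumulantTerm _ hn] at hFn hGn
    have hsum : ∑ π ∈ (NC n).erase {univ}, cumulantTerm F π a =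
        ∑ π ∈ (NC n).erase {univ}, cumulantTerm G π a :=
      sum_congr rfl fun π hπ => cumulantTerm_congr_of_ne_singleton_univ
        (fun m hm hmn => ih m hmn hm) (isPartition_of_mem_NC (mem_of_mem_erase hπ))
        (ne_of_mem_erase hπ) a
    linear_combination hGn - hFn - hsum

end Cumulants

theorem exists_unique_noncrossing_cumulants_general {A : Type*} [Ring A] [Algebra ℂ A]
    (τ : A →ₗ[ℂ] ℂ) :
    ∃ R : ∀ m : ℕ, MultilinearMap ℂ (fun _ : Fin m => A) ℂ,
      MomentCumulant τ R ∧
        ∀ R' : ∀ m : ℕ, MultilinearMap ℂ (fun _ : Fin m => A) ℂ,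
          MomentCumulant τ R' → ∀ n : ℕ, 0 < n → R' n = R n :=
  ⟨freeCumulant τ, momentCumulant_freeCumulant τ,
    fun _ hR' _ hn => hR'.unique (momentCumulant_freeCumulant τ) hn⟩

/-- In a noncommutative probability space `(A, τ)` there exists a family of multilinear
functionals `(R⁽ⁿ⁾)` satisfying the moment–cumulant relation over noncrossing partitions,
and the functionals `R⁽ⁿ⁾` for `n ≥ 1` are uniquely determined by this relation. -/
theorem exists_unique_noncrossing_cumulants {A : Type*} [Ring A] [Algebra ℂ A]
    (τ : A →ₗ[ℂ] ℂ) (hτ1 : τ 1 = 1) :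
    ∃ R : ∀ m : ℕ, MultilinearMap ℂ (fun _ : Fin m => A) ℂ,
      MomentCumulant τ R ∧
        ∀ R' : ∀ m : ℕ, MultilinearMap ℂ (fun _ : Fin m => A) ℂ,
          MomentCumulant τ R' → ∀ n : ℕ, 0 < n → R' n = R n :=
  exists_unique_noncrossing_cumulants_general τ
end

section
/- (Speicher) Let (A, τ) be a noncommutative probability space and X ∈ A. Consider the formal Laurent series G(z) = 1/z + Σ_{k=1}^∞ τ(Xᵏ) z^{−k−1} (the moment series of X) and let K be its compositional inverse, i.e. the formal series K with G(K(z)) = z. Then K(z) = 1/z + Σ_{k=1}^∞ R_k z^{k−1}, where R_k = R⁽ᵏ⁾(X, …, X) is the k-th noncrossing cumulant of X. Equivalently, as formal power series, G(1/z + Σ_{k=1}^∞ R⁽ᵏ⁾(X,…,X) z^{k−1}) = z. -/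
open scoped Classical

set_option linter.unusedSectionVars false
set_option maxHeartbeats 1000000

namespace Spe2
open Finset PowerSeries


/-- noncrossing partition of a finite set of naturals -/
def NCP (S : Finset ℕ) (π : Finset (Finset ℕ)) : Prop :=
  (∀ B ∈ π, B.Nonempty) ∧ (∀ B ∈ π, B ⊆ S) ∧
  (∀ i ∈ S, ∃! B, B ∈ π ∧ i ∈ B) ∧
  ∀ i j k l : ℕ, i < j → j < k → k < l →
    ∀ B ∈ π, ∀ B' ∈ π, i ∈ B → k ∈ B → j ∈ B' → l ∈ B' → B = B'

noncomputable def NCF (S : Finset ℕ) : Finset (Finset (Finset ℕ)) :=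
  S.powerset.powerset.filter (NCP S)

lemma mem_NCF {S : Finset ℕ} {π : Finset (Finset ℕ)} : π ∈ NCF S ↔ NCP S π := by
  simp only [NCF, mem_filter, mem_powerset, and_iff_right_iff_imp]
  intro h B hB
  simpa using h.2.1 B hB

noncomputable def wt (r : ℕ → ℂ) (π : Finset (Finset ℕ)) : ℂ := ∏ B ∈ π, r B.card

noncomputable def T (r : ℕ → ℂ) (S : Finset ℕ) : ℂ := ∑ π ∈ NCF S, wt r π

lemma NCF_empty : NCF ∅ = {∅} := by
  ext π
  simp only [mem_NCF, mem_singleton, NCP]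
  constructor
  · rintro ⟨h1, h2, -, -⟩
    ext B
    simp only [Finset.notMem_empty, iff_false]
    intro hB
    obtain ⟨b, hb⟩ := h1 B hB
    exact absurd (h2 B hB hb) (by simp)
  · rintro rfl
    refine ⟨by simp, by simp, by simp, by simp⟩

lemma T_empty (r : ℕ → ℂ) : T r ∅ = 1 := by
  simp [T, NCF_empty, wt]


section map
variable {S : Finset ℕ} {φ : ℕ → ℕ} (hφ : StrictMonoOn φ ↑S)
include hφ

lemma NCP_image {π : Finset (Finset ℕ)} (h : NCP S π) :
    NCP (S.image φ) (π.image (Finset.image φ)) := by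
  obtain ⟨h1, h2, h3, h4⟩ := h
  have hinj : Set.InjOn φ S := hφ.injOn
  have himg : ∀ B ∈ π, B.image φ ⊆ S.image φ := by
    intro B hB
    exact Finset.image_subset_image (h2 B hB)
  refine ⟨?_, ?_, ?_, ?_⟩
  · intro B' hB'
    obtain ⟨B, hB, rfl⟩ := Finset.mem_image.1 hB'
    exact (h1 B hB).image φ
  · intro B' hB'
    obtain ⟨B, hB, rfl⟩ := Finset.mem_image.1 hB'
    exact himg B hB
  · intro i' hi'
    obtain ⟨i, hi, rfl⟩ := Finset.mem_image.1 hi'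
    obtain ⟨B, ⟨hBπ, hiB⟩, huniq⟩ := h3 i hi
    refine ⟨B.image φ, ⟨Finset.mem_image_of_mem _ hBπ, Finset.mem_image_of_mem _ hiB⟩, ?_⟩
    rintro C' ⟨hC', hiC'⟩
    obtain ⟨C, hC, rfl⟩ := Finset.mem_image.1 hC'
    obtain ⟨c, hcC, hc⟩ := Finset.mem_image.1 hiC'
    have hcS : c ∈ S := h2 C hC hcC
    have : c = i := hinj hcS hi hc
    subst this
    rw [huniq C ⟨hC, hcC⟩]
  · intro i' j' k' l' hij hjk hkl B'' hB'' C'' hC'' hiB hkB hjC hlC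
    obtain ⟨B, hB, rfl⟩ := Finset.mem_image.1 hB''
    obtain ⟨C, hC, rfl⟩ := Finset.mem_image.1 hC''
    obtain ⟨i, hiBm, rfl⟩ := Finset.mem_image.1 hiB
    obtain ⟨k, hkBm, rfl⟩ := Finset.mem_image.1 hkB
    obtain ⟨j, hjCm, rfl⟩ := Finset.mem_image.1 hjC
    obtain ⟨l, hlCm, rfl⟩ := Finset.mem_image.1 hlC
    have hiS := h2 B hB hiBm; have hkS := h2 B hB hkBm
    have hjS := h2 C hC hjCm; have hlS := h2 C hC hlCm
    have h1' : i < j := by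
      by_contra hcon
      exact absurd (hφ.monotoneOn hjS hiS (not_lt.1 hcon)) (not_le.2 hij)
    have h2' : j < k := by
      by_contra hcon
      exact absurd (hφ.monotoneOn hkS hjS (not_lt.1 hcon)) (not_le.2 hjk)
    have h3' : k < l := by
      by_contra hcon
      exact absurd (hφ.monotoneOn hlS hkS (not_lt.1 hcon)) (not_le.2 hkl)
    rw [h4 i j k l h1' h2' h3' B hB C hC hiBm hkBm hjCm hlCm]

lemma image_image_inv {B : Finset ℕ} (hB : B ⊆ S) :
    (B.image φ).image (Function.invFunOn φ ↑S) = B := by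
  ext b
  simp only [Finset.mem_image]
  constructor
  · rintro ⟨y, ⟨c, hcB, rfl⟩, rfl⟩
    rwa [hφ.injOn (Function.invFunOn_mem ⟨c, hB hcB, rfl⟩)
      (hB hcB) (Function.invFunOn_eq ⟨c, hB hcB, rfl⟩)]
  · intro hbB
    exact ⟨φ b, ⟨b, hbB, rfl⟩,
      hφ.injOn (Function.invFunOn_mem ⟨b, hB hbB, rfl⟩) (hB hbB)
        (Function.invFunOn_eq ⟨b, hB hbB, rfl⟩)⟩

lemma invFunOn_strictMonoOn : StrictMonoOn (Function.invFunOn φ ↑S) ↑(S.image φ) := by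
  intro y1 hy1 y2 hy2 h12
  simp only [coe_image, Set.mem_image] at hy1 hy2
  obtain ⟨x1, hx1, rfl⟩ := hy1
  obtain ⟨x2, hx2, rfl⟩ := hy2
  have e1 : φ (Function.invFunOn φ ↑S (φ x1)) = φ x1 := Function.invFunOn_eq ⟨x1, hx1, rfl⟩
  have e2 : φ (Function.invFunOn φ ↑S (φ x2)) = φ x2 := Function.invFunOn_eq ⟨x2, hx2, rfl⟩
  have m1 : Function.invFunOn φ ↑S (φ x1) ∈ S := Function.invFunOn_mem ⟨x1, hx1, rfl⟩
  have m2 : Function.invFunOn φ ↑S (φ x2) ∈ S := Function.invFunOn_mem ⟨x2, hx2, rfl⟩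
  by_contra hcon
  have := hφ.monotoneOn m2 m1 (not_lt.1 hcon)
  rw [e1, e2] at this
  exact absurd this (not_le.2 h12)

lemma T_image : T r (S.image φ) = T r S := by
  classical
  symm
  refine Finset.sum_bij (fun π _ => π.image (Finset.image φ)) ?_ ?_ ?_ ?_
  · intro π hπ
    exact mem_NCF.2 (NCP_image hφ (mem_NCF.1 hπ))
  · intro π1 h1 π2 h2 heq
    have hsub1 := (mem_NCF.1 h1).2.1
    have hsub2 := (mem_NCF.1 h2).2.1
    have : ∀ π ∈ NCF S, (π.image (Finset.image φ)).image
        (Finset.image (Function.invFunOn φ ↑S)) = π := by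
      intro π hπ
      rw [Finset.image_image]
      have : ∀ B ∈ π, (Finset.image (Function.invFunOn φ ↑S) ∘ Finset.image φ) B = id B := by
        intro B hB
        simp only [Function.comp_apply, id_eq, Finset.image_image]
        rw [← Finset.image_image]
        exact image_image_inv hφ ((mem_NCF.1 hπ).2.1 B hB)
      rw [Finset.image_congr fun B hB => this B hB, Finset.image_id]
    have heq' : π1.image (Finset.image φ) = π2.image (Finset.image φ) := heq
    rw [← this π1 h1, ← this π2 h2, heq']
  · intro π' hπ'
    have h' := mem_NCF.1 hπ'
    have hcast : (π'.image (Finset.image (Function.invFunOn φ ↑S))).image (Finset.image φ) = π' := by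
      rw [Finset.image_image]
      have : ∀ B ∈ π', (Finset.image φ ∘ Finset.image (Function.invFunOn φ ↑S)) B = id B := by
        intro B hB
        have hBsub : B ⊆ S.image φ := h'.2.1 B hB
        simp only [Function.comp_apply, id_eq]
        ext y
        simp only [Finset.mem_image]
        constructor
        · rintro ⟨b, ⟨c, hcB, rfl⟩, rfl⟩
          have hc' : ∃ x ∈ (S : Set ℕ), φ x = c := by
            have := hBsub hcB
            simp only [Finset.mem_image] at this
            obtain ⟨x, hx, hxe⟩ := this
            exact ⟨x, hx, hxe⟩
          rw [Function.invFunOn_eq hc']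
          exact hcB
        · intro hyB
          have := hBsub hyB
          simp only [Finset.mem_image] at this
          obtain ⟨x, hx, rfl⟩ := this
          exact ⟨Function.invFunOn φ ↑S (φ x), ⟨φ x, hyB, rfl⟩, Function.invFunOn_eq ⟨x, hx, rfl⟩⟩
      rw [Finset.image_congr fun B hB => this B hB, Finset.image_id]
    refine ⟨π'.image (Finset.image (Function.invFunOn φ ↑S)), ?_, hcast⟩
    have h2 : NCP (((S.image φ)).image (Function.invFunOn φ ↑S))
        (π'.image (Finset.image (Function.invFunOn φ ↑S))) :=
      NCP_image (invFunOn_strictMonoOn hφ) h'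
    rw [show (S.image φ).image (Function.invFunOn φ ↑S) = S from
      image_image_inv hφ (Finset.Subset.refl S)] at h2
    exact mem_NCF.2 h2
  · intro π hπ
    unfold wt
    rw [Finset.prod_image]
    · refine Finset.prod_congr rfl fun B hB => ?_
      rw [Finset.card_image_of_injOn (hφ.injOn.mono
        (Finset.coe_subset.2 ((mem_NCF.1 hπ).2.1 B hB)))]
    · intro B1 h1 B2 h2 heq
      have e1 := image_image_inv hφ ((mem_NCF.1 hπ).2.1 B1 h1)
      have e2 := image_image_inv hφ ((mem_NCF.1 hπ).2.1 B2 h2)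
      rw [← e1, ← e2, heq]

end map

lemma T_card (r : ℕ → ℂ) (S : Finset ℕ) : T r S = T r (range S.card) := by
  classical
  set k := S.card with hk
  let e := S.orderIsoOfFin hk.symm
  set φ : ℕ → ℕ := fun i => if h : i < k then (e ⟨i, h⟩ : ℕ) else 0 with hφdef
  have hφ : StrictMonoOn φ ↑(range k) := by
    intro i hi j hj hij
    simp only [coe_range, Set.mem_Iio] at hi hj
    simp only [hφdef, dif_pos hi, dif_pos hj]
    exact_mod_cast e.strictMono (show (⟨i, hi⟩ : Fin k) < ⟨j, hj⟩ from hij)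
  have himg : (range k).image φ = S := by
    ext x
    simp only [Finset.mem_image, Finset.mem_range]
    constructor
    · rintro ⟨i, hi, rfl⟩
      simp only [hφdef, dif_pos hi]
      exact (e ⟨i, hi⟩).2
    · intro hx
      refine ⟨(e.symm ⟨x, hx⟩ : Fin k).1, (e.symm ⟨x, hx⟩).isLt, ?_⟩
      have heta : (⟨(e.symm ⟨x, hx⟩ : Fin k).1, (e.symm ⟨x, hx⟩).isLt⟩ : Fin k)
          = e.symm ⟨x, hx⟩ := by
        apply Fin.eta
      simp only [hφdef, dif_pos (e.symm ⟨x, hx⟩).isLt, heta, OrderIso.apply_symm_apply]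
  calc T r S = T r ((range k).image φ) := by rw [himg]
    _ = T r (range k) := T_image hφ

/-- transfer -/

lemma NC_transfer (r : ℕ → ℂ) (n : ℕ) :
    ∑ π ∈ NC n, (∏ B ∈ π, r B.card) = T r (range n) := by
  classical
  have hval : Function.Injective (Fin.val : Fin n → ℕ) := Fin.val_injective
  have hFinj : Function.Injective (Finset.image (Fin.val : Fin n → ℕ)) :=
    Finset.image_injective hval
  refine Finset.sum_bij (fun π _ => π.image (Finset.image Fin.val)) ?_ ?_ ?_ ?_
  · intro π hπ
    simp only [NC, mem_filter, mem_univ, true_and] at hπ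
    obtain ⟨⟨hne, hcov⟩, hnc⟩ := hπ
    refine mem_NCF.2 ⟨?_, ?_, ?_, ?_⟩
    · intro B' hB'
      obtain ⟨B, hB, rfl⟩ := Finset.mem_image.1 hB'
      exact (hne B hB).image _
    · intro B' hB'
      obtain ⟨B, hB, rfl⟩ := Finset.mem_image.1 hB'
      intro y hy
      obtain ⟨i, _, rfl⟩ := Finset.mem_image.1 hy
      exact Finset.mem_range.2 i.isLt
    · intro i hi
      obtain ⟨B, ⟨hBπ, hiB⟩, huniq⟩ := hcov ⟨i, Finset.mem_range.1 hi⟩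
      refine ⟨B.image Fin.val, ⟨Finset.mem_image_of_mem _ hBπ, Finset.mem_image_of_mem _ hiB⟩, ?_⟩
      rintro C' ⟨hC', hiC'⟩
      obtain ⟨C, hC, rfl⟩ := Finset.mem_image.1 hC'
      obtain ⟨c, hcC, hc⟩ := Finset.mem_image.1 hiC'
      have : c = ⟨i, Finset.mem_range.1 hi⟩ := by
        apply hval; simpa using hc
      subst this
      rw [huniq C ⟨hC, hcC⟩]
    · intro i j k l hij hjk hkl B'' hB'' C'' hC'' hiB hkB hjC hlC
      obtain ⟨B, hB, rfl⟩ := Finset.mem_image.1 hB''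
      obtain ⟨C, hC, rfl⟩ := Finset.mem_image.1 hC''
      obtain ⟨i', hi', rfl⟩ := Finset.mem_image.1 hiB
      obtain ⟨k', hk', rfl⟩ := Finset.mem_image.1 hkB
      obtain ⟨j', hj', rfl⟩ := Finset.mem_image.1 hjC
      obtain ⟨l', hl', rfl⟩ := Finset.mem_image.1 hlC
      by_contra hBC
      have hBC' : B ≠ C := fun h => hBC (by rw [h])
      exact hnc ⟨i', j', k', l', hij, hjk, hkl, B, hB, C, hC, hBC', hi', hk', hj', hl'⟩
  · intro π1 h1 π2 h2 heq
    have heq' : π1.image (Finset.image Fin.val) = π2.image (Finset.image Fin.val) := heq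
    exact Finset.image_injective hFinj heq'
  · intro π' hπ'
    have h' := mem_NCF.1 hπ'
    have hlt : ∀ B ∈ π', ∀ y ∈ B, y < n := by
      intro B hB y hy
      exact Finset.mem_range.1 (h'.2.1 B hB hy)
    set pre : Finset ℕ → Finset (Fin n) := fun B => B.preimage Fin.val (hval.injOn) with hpre
    have hback : ∀ B ∈ π', (pre B).image Fin.val = B := by
      intro B hB
      ext y
      simp only [hpre, Finset.mem_image, Finset.mem_preimage]
      constructor
      · rintro ⟨i, hi, rfl⟩; exact hi
      · intro hy; exact ⟨⟨y, hlt B hB y hy⟩, hy, rfl⟩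
    refine ⟨π'.image pre, ?_, ?_⟩
    · simp only [NC, mem_filter, mem_univ, true_and]
      refine ⟨⟨?_, ?_⟩, ?_⟩
      · intro B hB
        obtain ⟨B', hB', rfl⟩ := Finset.mem_image.1 hB
        obtain ⟨b, hb⟩ := h'.1 B' hB'
        exact ⟨⟨b, hlt B' hB' b hb⟩, Finset.mem_preimage.2 hb⟩
      · intro i
        obtain ⟨B', ⟨hB', hiB'⟩, huniq⟩ := h'.2.2.1 i.1 (Finset.mem_range.2 i.isLt)
        refine ⟨pre B', ⟨Finset.mem_image_of_mem _ hB', Finset.mem_preimage.2 hiB'⟩, ?_⟩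
        rintro C ⟨hC, hiC⟩
        obtain ⟨C', hC', rfl⟩ := Finset.mem_image.1 hC
        rw [huniq C' ⟨hC', Finset.mem_preimage.1 hiC⟩]
      · rintro ⟨i, j, k, l, hij, hjk, hkl, B, hB, C, hC, hBC, hiB, hkB, hjC, hlC⟩
        obtain ⟨B', hB', rfl⟩ := Finset.mem_image.1 hB
        obtain ⟨C', hC', rfl⟩ := Finset.mem_image.1 hC
        have := h'.2.2.2 i.1 j.1 k.1 l.1 hij hjk hkl B' hB' C' hC'
          (Finset.mem_preimage.1 hiB) (Finset.mem_preimage.1 hkB)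
          (Finset.mem_preimage.1 hjC) (Finset.mem_preimage.1 hlC)
        subst this
        exact hBC rfl
    · show (π'.image pre).image (Finset.image Fin.val) = π'
      rw [Finset.image_image]
      symm
      have : Finset.image (Finset.image Fin.val ∘ pre) π' = Finset.image id π' :=
        Finset.image_congr (fun B hB => hback B hB)
      rw [this, Finset.image_id]
  · intro π hπ
    unfold wt
    rw [Finset.prod_image]
    · exact Finset.prod_congr rfl fun B _ => by rw [Finset.card_image_of_injective _ hval]
    · intro B1 h1 B2 h2 heq
      exact Finset.image_injective hval heq

def gapn (n : ℕ) (V : Finset ℕ) (v : ℕ) : Finset ℕ :=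
  (range n).filter fun x => v < x ∧ ∀ w ∈ V, w ≤ v ∨ x < w

lemma mem_gapn {n : ℕ} {V : Finset ℕ} {v x : ℕ} :
    x ∈ gapn n V v ↔ x < n ∧ v < x ∧ ∀ w ∈ V, w ≤ v ∨ x < w := by
  simp [gapn, mem_filter, mem_range, and_assoc]

lemma gapn_subset {n : ℕ} {V : Finset ℕ} {v : ℕ} : gapn n V v ⊆ range n :=
  Finset.filter_subset _ _

lemma not_mem_gapn_self {n : ℕ} {V : Finset ℕ} {v x : ℕ} (hx : x ∈ gapn n V v)
    (hxV : x ∈ V) : False := by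
  obtain ⟨-, hvx, hall⟩ := mem_gapn.1 hx
  rcases hall x hxV with h | h
  · omega
  · omega

lemma gapn_disj {n : ℕ} {V : Finset ℕ} {v v' x : ℕ} (hv : v ∈ V) (hv' : v' ∈ V)
    (hne : v ≠ v') (hx : x ∈ gapn n V v) (hx' : x ∈ gapn n V v') : False := by
  obtain ⟨-, hvx, hall⟩ := mem_gapn.1 hx
  obtain ⟨-, hvx', hall'⟩ := mem_gapn.1 hx'
  rcases hall v' hv' with h | h
  · rcases hall' v hv with h2 | h2 <;> omega
  · omega

noncomputable def blockOf (π : Finset (Finset ℕ)) (a : ℕ) : Finset ℕ :=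
  (π.filter fun B => a ∈ B).sup id

lemma blockOf_spec {S : Finset ℕ} {π : Finset (Finset ℕ)} (h : NCP S π) {a : ℕ}
    (ha : a ∈ S) : blockOf π a ∈ π ∧ a ∈ blockOf π a ∧
      ∀ B ∈ π, a ∈ B → B = blockOf π a := by
  obtain ⟨B₀, ⟨hB₀, haB₀⟩, huni⟩ := h.2.2.1 a ha
  have hfil : π.filter (fun B => a ∈ B) = {B₀} := by
    ext C
    simp only [mem_filter, mem_singleton]
    constructor
    · rintro ⟨hC, haC⟩; exact huni C ⟨hC, haC⟩
    · rintro rfl; exact ⟨hB₀, haB₀⟩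
  have : blockOf π a = B₀ := by rw [blockOf, hfil, Finset.sup_singleton]; rfl
  rw [this]
  exact ⟨hB₀, haB₀, fun B hB haB => huni B ⟨hB, haB⟩⟩

lemma eq_of_mem_mem {S : Finset ℕ} {π : Finset (Finset ℕ)} (h : NCP S π)
    {B C : Finset ℕ} (hB : B ∈ π) (hC : C ∈ π) {y : ℕ} (hyB : y ∈ B) (hyC : y ∈ C) :
    B = C := by
  obtain ⟨D, -, huni⟩ := h.2.2.1 y (h.2.1 B hB hyB)
  rw [huni B ⟨hB, hyB⟩, huni C ⟨hC, hyC⟩]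

/-- every block other than the block of 0 lies in a single gap -/
lemma block_in_gap {n : ℕ} {π : Finset (Finset ℕ)} (h : NCP (range n) π) (hn : 0 < n)
    {B : Finset ℕ} (hB : B ∈ π) (hBV : B ≠ blockOf π 0) :
    ∃ v ∈ blockOf π 0, B ⊆ gapn n (blockOf π 0) v := by
  obtain ⟨hVπ, h0V, huni⟩ := blockOf_spec h (mem_range.2 hn)
  set V := blockOf π 0 with hVdef
  have hBne := h.1 B hB
  set b := B.min' hBne with hbdef
  have hbB : b ∈ B := B.min'_mem hBne
  have h0B : 0 ∉ B := fun h0 => hBV (huni B hB h0)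
  have hb0 : 0 < b := Nat.pos_of_ne_zero (fun e => h0B (e ▸ hbB))
  have hW0 : (0 : ℕ) ∈ V.filter (· < b) := mem_filter.2 ⟨h0V, hb0⟩
  set v := (V.filter (· < b)).max' ⟨0, hW0⟩ with hvdef
  have hvW : v ∈ V.filter (· < b) := Finset.max'_mem _ _
  have hvV : v ∈ V := (mem_filter.1 hvW).1
  have hvb : v < b := by simpa using (mem_filter.1 hvW).2
  refine ⟨v, hvV, ?_⟩
  intro x hxB
  have hxS : x ∈ range n := h.2.1 B hB hxB
  have hbx : b ≤ x := B.min'_le x hxB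
  refine mem_gapn.2 ⟨mem_range.1 hxS, by omega, ?_⟩
  intro w hwV
  by_contra hcon
  push_neg at hcon
  obtain ⟨hvw, hwx⟩ := hcon
  have hbw : b ≤ w := by
    by_contra hwb
    have hmem : w ∈ V.filter (· < b) := mem_filter.2 ⟨hwV, show w < b by omega⟩
    have h2 := Finset.le_max' (V.filter (· < b)) w hmem
    have h3 : w ≤ v := by rw [hvdef]; exact h2
    omega
  have hbne : b ≠ w := by
    rintro rfl
    exact hBV (eq_of_mem_mem h hB hVπ hbB hwV)
  have hwxne : w ≠ x := by
    rintro rfl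
    exact hBV (eq_of_mem_mem h hB hVπ hxB hwV)
  have := h.2.2.2 0 b w x hb0 (by omega) (by omega) V hVπ B hB h0V hwV hbB hxB
  exact hBV this.symm

lemma exists_gap {n : ℕ} {V : Finset ℕ} (hV0 : 0 ∈ V) {x : ℕ} (hx : x < n)
    (hxV : x ∉ V) : ∃ v ∈ V, x ∈ gapn n V v := by
  have hx0 : 0 < x := Nat.pos_of_ne_zero (fun e => hxV (e ▸ hV0))
  have hW0 : (0 : ℕ) ∈ V.filter (· < x) := mem_filter.2 ⟨hV0, hx0⟩
  set v := (V.filter (· < x)).max' ⟨0, hW0⟩ with hvdef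
  have hvW : v ∈ V.filter (· < x) := Finset.max'_mem _ _
  have hvV : v ∈ V := (mem_filter.1 hvW).1
  have hvx : v < x := by simpa using (mem_filter.1 hvW).2
  refine ⟨v, hvV, mem_gapn.2 ⟨hx, hvx, ?_⟩⟩
  intro w hwV
  by_contra hcon
  push_neg at hcon
  obtain ⟨hvw, hwx⟩ := hcon
  have hwne : w ≠ x := fun e => hxV (e ▸ hwV)
  have hmem : w ∈ V.filter (· < x) := mem_filter.2 ⟨hwV, show w < x by omega⟩
  have h2 := Finset.le_max' (V.filter (· < x)) w hmem
  have h3 : w ≤ v := by rw [hvdef]; exact h2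
  omega


lemma zero_not_mem_gapn {n : ℕ} {V : Finset ℕ} {v : ℕ} (h : 0 ∈ gapn n V v) : False := by
  obtain ⟨-, h2, -⟩ := mem_gapn.1 h; omega

lemma gapn_between {n : ℕ} {V : Finset ℕ} {v v' x y z : ℕ} (hvV : v ∈ V) (hv'V : v' ∈ V)
    (hne : v ≠ v') (hx : x ∈ gapn n V v) (hy : y ∈ gapn n V v) (hz : z ∈ gapn n V v')
    (h1 : x < z) (h2 : z < y) : False := by
  obtain ⟨-, hvx, hax⟩ := mem_gapn.1 hx
  obtain ⟨-, hvy, hay⟩ := mem_gapn.1 hy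
  obtain ⟨-, hv'z, haz⟩ := mem_gapn.1 hz
  rcases hay v' hv'V with h3 | h3
  · rcases haz v hvV with h4 | h4 <;> omega
  · omega

section glue
variable {n : ℕ} {V : Finset ℕ} {p : ∀ v ∈ V, Finset (Finset ℕ)}

/-- the reassembled partition -/
noncomputable def jq (V : Finset ℕ) (p : ∀ v ∈ V, Finset (Finset ℕ)) : Finset (Finset ℕ) :=
  insert V (V.attach.biUnion fun v => p v.1 v.2)

variable (hVr : V ⊆ range n) (hV0 : 0 ∈ V)
  (hp : ∀ (v : ℕ) (hv : v ∈ V), NCP (gapn n V v) (p v hv))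
include hVr hV0 hp

lemma jq_mem_iff {B : Finset ℕ} :
    B ∈ jq V p ↔ B = V ∨ ∃ (v : ℕ) (hv : v ∈ V), B ∈ p v hv := by
  simp only [jq, mem_insert, mem_biUnion, mem_attach, true_and]
  constructor
  · rintro (rfl | ⟨⟨v, hv⟩, hB⟩)
    · exact Or.inl rfl
    · exact Or.inr ⟨v, hv, hB⟩
  · rintro (rfl | ⟨v, hv, hB⟩)
    · exact Or.inl rfl
    · exact Or.inr ⟨⟨v, hv⟩, hB⟩

lemma jq_char {B : Finset ℕ} {v : ℕ} (hv : v ∈ V) :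
    B ∈ p v hv ↔ B ∈ jq V p ∧ B ⊆ gapn n V v := by
  constructor
  · intro hB
    exact ⟨(jq_mem_iff hVr hV0 hp).2 (Or.inr ⟨v, hv, hB⟩), (hp v hv).2.1 B hB⟩
  · rintro ⟨hBj, hBsub⟩
    rcases (jq_mem_iff hVr hV0 hp).1 hBj with rfl | ⟨v', hv', hB⟩
    · exact absurd (hBsub hV0) (fun h => zero_not_mem_gapn h)
    · obtain ⟨b, hb⟩ := (hp v' hv').1 B hB
      have hbv' : b ∈ gapn n V v' := (hp v' hv').2.1 B hB hb
      have hbv : b ∈ gapn n V v := hBsub hb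
      have : v' = v := by
        by_contra hne
        exact gapn_disj hv' hv hne hbv' hbv
      subst this
      exact hB

lemma jq_NCP : NCP (range n) (jq V p) := by
  refine ⟨?_, ?_, ?_, ?_⟩
  · intro B hB
    rcases (jq_mem_iff hVr hV0 hp).1 hB with rfl | ⟨v, hv, hB'⟩
    · exact ⟨0, hV0⟩
    · exact (hp v hv).1 B hB'
  · intro B hB
    rcases (jq_mem_iff hVr hV0 hp).1 hB with rfl | ⟨v, hv, hB'⟩
    · exact hVr
    · exact fun y hy => gapn_subset ((hp v hv).2.1 B hB' hy)
  · intro i hi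
    by_cases hiV : i ∈ V
    · refine ⟨V, ⟨(jq_mem_iff hVr hV0 hp).2 (Or.inl rfl), hiV⟩, ?_⟩
      rintro C ⟨hC, hiC⟩
      rcases (jq_mem_iff hVr hV0 hp).1 hC with rfl | ⟨v, hv, hC'⟩
      · rfl
      · exact absurd hiV (fun h => not_mem_gapn_self ((hp v hv).2.1 C hC' hiC) h)
    · obtain ⟨v, hv, higap⟩ := exists_gap hV0 (mem_range.1 hi) hiV
      obtain ⟨B, ⟨hBp, hiB⟩, huni⟩ := (hp v hv).2.2.1 i higap
      refine ⟨B, ⟨(jq_mem_iff hVr hV0 hp).2 (Or.inr ⟨v, hv, hBp⟩), hiB⟩, ?_⟩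
      rintro C ⟨hC, hiC⟩
      rcases (jq_mem_iff hVr hV0 hp).1 hC with rfl | ⟨v', hv', hC'⟩
      · exact absurd hiC hiV
      · have hsub := (hp v' hv').2.1 C hC'
        have : v' = v := by
          by_contra hne
          exact gapn_disj hv' hv hne (hsub hiC) higap
        subst this
        exact huni C ⟨hC', hiC⟩
  · intro i j k l hij hjk hkl B hB C hC hiB hkB hjC hlC
    rcases (jq_mem_iff hVr hV0 hp).1 hB with rfl | ⟨v, hv, hB'⟩ <;>
      rcases (jq_mem_iff hVr hV0 hp).1 hC with h2 | ⟨v', hv', hC'⟩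
    · exact h2.symm
    · -- B = V, C in gap v'
      have hsub := (hp v' hv').2.1 C hC'
      have hjg := hsub hjC
      have hlg := hsub hlC
      obtain ⟨-, hv'j, -⟩ := mem_gapn.1 hjg
      obtain ⟨-, -, hal⟩ := mem_gapn.1 hlg
      rcases hal k hkB with h3 | h3 <;> omega
    · -- B in gap v, C = V
      subst h2
      have hsub := (hp v hv).2.1 B hB'
      have hig := hsub hiB
      have hkg := hsub hkB
      obtain ⟨-, hvi, -⟩ := mem_gapn.1 hig
      obtain ⟨-, -, hak⟩ := mem_gapn.1 hkg
      rcases hak j hjC with h3 | h3 <;> omega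
    · by_cases hvv : v = v'
      · subst hvv
        exact (hp v hv).2.2.2 i j k l hij hjk hkl B hB' C hC' hiB hkB hjC hlC
      · have hsubB := (hp v hv).2.1 B hB'
        have hsubC := (hp v' hv').2.1 C hC'
        exact absurd (gapn_between hv hv' hvv (hsubB hiB) (hsubB hkB) (hsubC hjC) hij hjk)
          (fun h => h)

lemma jq_wt (r : ℕ → ℂ) :
    wt r (jq V p) = r V.card * ∏ v ∈ V.attach, wt r (p v.1 v.2) := by
  have hVnot : V ∉ V.attach.biUnion fun v => p v.1 v.2 := by
    intro hmem
    obtain ⟨⟨v, hv⟩, -, hVp⟩ := mem_biUnion.1 hmem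
    exact zero_not_mem_gapn ((hp v hv).2.1 V hVp hV0)
  have hdisj : (↑V.attach : Set {x // x ∈ V}).PairwiseDisjoint (fun v => p v.1 v.2) := by
    intro a _ b _ hab
    simp only [Finset.disjoint_left]
    intro B hBa hBb
    obtain ⟨c, hc⟩ := (hp a.1 a.2).1 B hBa
    have h1 := (hp a.1 a.2).2.1 B hBa hc
    have h2 := (hp b.1 b.2).2.1 B hBb hc
    exact gapn_disj a.2 b.2 (fun e => hab (Subtype.ext e)) h1 h2
  rw [wt, jq, Finset.prod_insert hVnot, Finset.prod_biUnion hdisj]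
  rfl

end glue

lemma T_rec (r : ℕ → ℂ) (n : ℕ) (hn : 0 < n) :
    T r (range n) = ∑ V ∈ (range n).powerset.filter (fun V => 0 ∈ V),
      r V.card * ∏ v ∈ V, T r (gapn n V v) := by
  classical
  have step1 : ∀ V : Finset ℕ, r V.card * ∏ v ∈ V, T r (gapn n V v)
      = ∑ p ∈ V.pi (fun v => NCF (gapn n V v)),
          r V.card * ∏ v ∈ V.attach, wt r (p v.1 v.2) := by
    intro V
    rw [show ∏ v ∈ V, T r (gapn n V v)
        = ∑ p ∈ V.pi (fun v => NCF (gapn n V v)), ∏ v ∈ V.attach, wt r (p v.1 v.2) from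
      Finset.prod_sum V _ _, Finset.mul_sum]
  rw [Finset.sum_congr rfl (fun V _ => step1 V), T]
  refine Eq.trans ?_ (Finset.sum_sigma ((range n).powerset.filter (fun V => 0 ∈ V))
    (fun V => V.pi (fun v => NCF (gapn n V v)))
    (fun q => r q.1.card * ∏ v ∈ q.1.attach, wt r (q.2 v.1 v.2)))
  symm
  refine Finset.sum_bij (fun q _ => jq q.1 q.2) ?_ ?_ ?_ ?_
  · rintro ⟨V, p⟩ hq
    simp only [mem_sigma, mem_filter, mem_powerset, Finset.mem_pi] at hq
    obtain ⟨⟨hVr, hV0⟩, hp⟩ := hq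
    exact mem_NCF.2 (jq_NCP hVr hV0 (fun v hv => mem_NCF.1 (hp v hv)))
  · rintro ⟨V1, p1⟩ hq1 ⟨V2, p2⟩ hq2 heq
    simp only [mem_sigma, mem_filter, mem_powerset, Finset.mem_pi] at hq1 hq2
    obtain ⟨⟨hVr1, hV01⟩, hp1⟩ := hq1
    obtain ⟨⟨hVr2, hV02⟩, hp2⟩ := hq2
    have hp1' := fun v hv => mem_NCF.1 (hp1 v hv)
    have hp2' := fun v hv => mem_NCF.1 (hp2 v hv)
    have heq' : jq V1 p1 = jq V2 p2 := heq
    have hNCP := jq_NCP hVr1 hV01 hp1'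
    have hV1mem : V1 ∈ jq V1 p1 := (jq_mem_iff hVr1 hV01 hp1').2 (Or.inl rfl)
    have hV2mem : V2 ∈ jq V1 p1 := by
      rw [heq']; exact (jq_mem_iff hVr2 hV02 hp2').2 (Or.inl rfl)
    have hVV : V1 = V2 := eq_of_mem_mem hNCP hV1mem hV2mem hV01 hV02
    subst hVV
    have hpp : p1 = p2 := by
      funext v hv
      ext B
      rw [jq_char hVr1 hV01 hp1' hv, jq_char hVr2 hV02 hp2' hv, heq']
    rw [hpp]
  · intro π hπ
    have h := mem_NCF.1 hπ
    obtain ⟨hVπ, hV0, huni⟩ := blockOf_spec h (mem_range.2 hn)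
    set V := blockOf π 0 with hVdef
    have hVr : V ⊆ range n := h.2.1 V hVπ
    set p : ∀ v ∈ V, Finset (Finset ℕ) :=
      fun v _ => π.filter (fun B => B ⊆ gapn n V v) with hpdef
    have hp : ∀ (v : ℕ) (hv : v ∈ V), NCP (gapn n V v) (p v hv) := by
      intro v hv
      refine ⟨?_, ?_, ?_, ?_⟩
      · intro B hB
        exact h.1 B (mem_filter.1 hB).1
      · intro B hB
        exact (mem_filter.1 hB).2
      · intro x hx
        have hxr : x ∈ range n := gapn_subset hx
        obtain ⟨B, ⟨hBπ, hxB⟩, huniB⟩ := h.2.2.1 x hxr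
        have hxV : x ∉ V := fun hmem => not_mem_gapn_self hx hmem
        have hBV : B ≠ V := fun e => hxV (e ▸ hxB)
        obtain ⟨v', hv', hBsub⟩ := block_in_gap h hn hBπ hBV
        have hvv : v' = v := by
          by_contra hne
          exact gapn_disj hv' hv hne (hBsub hxB) hx
        subst hvv
        refine ⟨B, ⟨mem_filter.2 ⟨hBπ, hBsub⟩, hxB⟩, ?_⟩
        rintro C ⟨hC, hxC⟩
        exact huniB C ⟨(mem_filter.1 hC).1, hxC⟩
      · intro i j k l hij hjk hkl B hB C hC hiB hkB hjC hlC
        exact h.2.2.2 i j k l hij hjk hkl B (mem_filter.1 hB).1 C (mem_filter.1 hC).1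
          hiB hkB hjC hlC
    have hjq : jq V p = π := by
      apply Finset.Subset.antisymm
      · intro B hB
        rcases (jq_mem_iff hVr hV0 hp).1 hB with rfl | ⟨v, hv, hB'⟩
        · exact hVπ
        · exact (mem_filter.1 hB').1
      · intro B hB
        by_cases hBV : B = V
        · subst hBV
          exact (jq_mem_iff hVr hV0 hp).2 (Or.inl rfl)
        · obtain ⟨v, hv, hBsub⟩ := block_in_gap h hn hB hBV
          exact (jq_mem_iff hVr hV0 hp).2
            (Or.inr ⟨v, hv, mem_filter.2 ⟨hB, hBsub⟩⟩)
    refine ⟨⟨V, p⟩, ?_, hjq⟩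
    simp only [mem_sigma, mem_filter, mem_powerset, Finset.mem_pi]
    exact ⟨⟨hVr, hV0⟩, fun v hv => mem_NCF.2 (hp v hv)⟩
  · rintro ⟨V, p⟩ hq
    simp only [mem_sigma, mem_filter, mem_powerset, Finset.mem_pi] at hq
    obtain ⟨⟨hVr, hV0⟩, hp⟩ := hq
    exact (jq_wt hVr hV0 (fun v hv => mem_NCF.1 (hp v hv)) r).symm

lemma gap_sum (g : ℕ → ℂ) : ∀ s n : ℕ,
    ∑ V ∈ (range n).powerset.filter (fun V => 0 ∈ V ∧ V.card = s + 1),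
      ∏ v ∈ V, g (gapn n V v).card
    = coeff n ((X * PowerSeries.mk g) ^ (s + 1)) := by
  intro s
  induction s with
  | zero =>
    intro n
    match n with
    | 0 =>
      rw [show (range 0).powerset.filter (fun V => 0 ∈ V ∧ V.card = 0 + 1) = ∅ by
        ext V
        simp only [range_zero, powerset_empty, mem_filter, mem_singleton, notMem_empty,
          iff_false, not_and]
        rintro rfl h
        simp at h]
      simp [coeff_zero_eq_constantCoeff, map_mul]
    | (m+1) =>
      rw [show (range (m+1)).powerset.filter (fun V => 0 ∈ V ∧ V.card = 0 + 1) = {{0}} by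
        ext V
        simp only [mem_filter, mem_powerset, mem_singleton]
        constructor
        · rintro ⟨hsub, h0, hcard⟩
          obtain ⟨a, rfl⟩ := Finset.card_eq_one.1 hcard
          have h := Finset.mem_singleton.1 h0
          rw [← h]
        · rintro rfl
          refine ⟨by simp [Finset.singleton_subset_iff], by simp, by simp⟩]
      rw [Finset.sum_singleton, Finset.prod_singleton]
      rw [show gapn (m+1) {0} 0 = Ico 1 (m+1) by
        ext x
        rw [mem_gapn]
        simp only [Finset.mem_singleton, Finset.mem_Ico]
        constructor
        · rintro ⟨h1, h2, -⟩; omega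
        · intro h
          exact ⟨by omega, by omega, fun w hw => by subst hw; omega⟩]
      rw [Nat.card_Ico, pow_one, coeff_succ_X_mul]
      simp
  | succ s ih =>
    intro n
    match n with
    | 0 =>
      rw [show (range 0).powerset.filter (fun V => 0 ∈ V ∧ V.card = s + 1 + 1) = ∅ by
        ext V
        simp only [range_zero, powerset_empty, mem_filter, mem_singleton, notMem_empty,
          iff_false, not_and]
        rintro rfl h
        simp at h]
      simp [coeff_zero_eq_constantCoeff, map_mul]
    | (N+1) =>
      set n := N + 1 with hndef
      have hrhs : coeff n ((X * PowerSeries.mk g) ^ (s + 1 + 1))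
          = ∑ q ∈ range n, g q * coeff (n - (q + 1)) ((X * PowerSeries.mk g) ^ (s + 1)) := by
        rw [pow_succ, mul_comm ((X * PowerSeries.mk g) ^ (s+1)) _]
        rw [coeff_mul, Finset.Nat.sum_antidiagonal_eq_sum_range_succ_mk]
        rw [Finset.sum_range_succ']
        have h0 : coeff 0 (X * PowerSeries.mk g) = 0 := by
          simp [coeff_zero_eq_constantCoeff, map_mul]
        rw [h0, zero_mul, add_zero]
        refine Finset.sum_congr rfl fun q hq => ?_
        rw [coeff_succ_X_mul, coeff_mk]
      rw [hrhs]
      have hih : ∀ q : ℕ, g q * coeff (n - (q + 1)) ((X * PowerSeries.mk g) ^ (s + 1))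
          = ∑ V' ∈ (range (n - (q+1))).powerset.filter (fun V => 0 ∈ V ∧ V.card = s + 1),
              g q * ∏ v ∈ V', g (gapn (n - (q+1)) V' v).card := by
        intro q
        rw [← ih (n - (q+1)), Finset.mul_sum]
      rw [Finset.sum_congr rfl fun q _ => hih q]
      refine Eq.symm (Eq.trans ?_ (Finset.sum_sigma (range n)
        (fun q => (range (n - (q+1))).powerset.filter (fun V => 0 ∈ V ∧ V.card = s + 1))
        (fun z => g z.1 * ∏ v ∈ z.2, g (gapn (n - (z.1+1)) z.2 v).card))).symm
      -- now: ∑ V ∈ LHS-set = ∑ z ∈ sigma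
      symm
      refine Finset.sum_bij (fun z _ => insert 0 (z.2.image (· + (z.1 + 1)))) ?_ ?_ ?_ ?_
      · rintro ⟨q, V'⟩ hz
        simp only [mem_sigma, mem_range, mem_filter, mem_powerset] at hz
        obtain ⟨hq, hV'r, hV'0, hV'c⟩ := hz
        have hsub : ∀ y ∈ V', y < n - (q+1) := fun y hy => mem_range.1 (hV'r hy)
        simp only [mem_filter, mem_powerset]
        refine ⟨?_, Finset.mem_insert_self _ _, ?_⟩
        · intro y hy
          rcases Finset.mem_insert.1 hy with rfl | hy'
          · exact mem_range.2 (by omega)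
          · obtain ⟨v', hv', rfl⟩ := Finset.mem_image.1 hy'
            have := hsub v' hv'
            exact mem_range.2 (by omega)
        · rw [Finset.card_insert_of_notMem, Finset.card_image_of_injective _
            (add_left_injective (q+1)), hV'c]
          intro hmem
          obtain ⟨v', -, hv'⟩ := Finset.mem_image.1 hmem
          omega
      · rintro ⟨q1, V1⟩ hz1 ⟨q2, V2⟩ hz2 heq
        simp only [mem_sigma, mem_range, mem_filter, mem_powerset] at hz1 hz2
        obtain ⟨hq1, hV1r, hV10, hV1c⟩ := hz1
        obtain ⟨hq2, hV2r, hV20, hV2c⟩ := hz2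
        have heq' : insert 0 (V1.image (· + (q1+1))) = insert 0 (V2.image (· + (q2+1))) := heq
        have hnm1 : (0:ℕ) ∉ V1.image (· + (q1+1)) := by
          intro hmem; obtain ⟨v', -, hv'⟩ := Finset.mem_image.1 hmem; omega
        have hnm2 : (0:ℕ) ∉ V2.image (· + (q2+1)) := by
          intro hmem; obtain ⟨v', -, hv'⟩ := Finset.mem_image.1 hmem; omega
        have hE : V1.image (· + (q1+1)) = V2.image (· + (q2+1)) := by
          have := congrArg (fun S => Finset.erase S 0) heq'
          simpa [Finset.erase_insert_eq_erase, Finset.erase_eq_of_notMem hnm1,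
            Finset.erase_eq_of_notMem hnm2] using this
        have hq12 : q1 = q2 := by
          have h1 : q1 + 1 ∈ V2.image (· + (q2+1)) := by
            rw [← hE]; exact Finset.mem_image.2 ⟨0, hV10, by omega⟩
          have h2 : q2 + 1 ∈ V1.image (· + (q1+1)) := by
            rw [hE]; exact Finset.mem_image.2 ⟨0, hV20, by omega⟩
          obtain ⟨a, -, ha⟩ := Finset.mem_image.1 h1
          obtain ⟨b, -, hb⟩ := Finset.mem_image.1 h2
          omega
        subst hq12
        have : V1 = V2 := Finset.image_injective (add_left_injective (q1+1)) hE
        rw [this]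
      · intro V hV
        simp only [mem_filter, mem_powerset] at hV
        obtain ⟨hVr, hV0, hVc⟩ := hV
        have hEne : (V.erase 0).Nonempty := by
          rw [← Finset.card_pos, Finset.card_erase_of_mem hV0, hVc]; omega
        set c := (V.erase 0).min' hEne with hcdef
        have hcE : c ∈ V.erase 0 := Finset.min'_mem _ _
        have hc0 : 0 < c := by
          have := Finset.mem_erase.1 hcE; omega
        have hcV : c ∈ V := (Finset.mem_erase.1 hcE).2
        have hcn : c < n := mem_range.1 (hVr hcV)
        have hcmin : ∀ y ∈ V.erase 0, c ≤ y := fun y hy => Finset.min'_le _ y hy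
        refine ⟨⟨c - 1, (V.erase 0).image (· - c)⟩, ?_, ?_⟩
        · simp only [mem_sigma, mem_range, mem_filter, mem_powerset]
          have hc1 : c - 1 + 1 = c := by omega
          refine ⟨by omega, ?_, ?_, ?_⟩
          · intro y hy
            obtain ⟨e, he, rfl⟩ := Finset.mem_image.1 hy
            have h1 : e < n := mem_range.1 (hVr (Finset.mem_erase.1 he).2)
            have h2 := hcmin e he
            exact mem_range.2 (by omega)
          · exact Finset.mem_image.2 ⟨c, hcE, by omega⟩
          · rw [Finset.card_image_of_injOn (fun a ha b hb hab => by
                have h1 := hcmin a (Finset.mem_coe.1 ha)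
                have h2 := hcmin b (Finset.mem_coe.1 hb)
                omega), Finset.card_erase_of_mem hV0, hVc]
            omega
        · show insert 0 (((V.erase 0).image (· - c)).image (· + (c - 1 + 1))) = V
          have hc1 : c - 1 + 1 = c := by omega
          rw [hc1, Finset.image_image]
          have : (V.erase 0).image ((· + c) ∘ (· - c)) = V.erase 0 := by
            rw [show ((· + c) ∘ (· - c)) = fun e => e - c + c from rfl]
            apply Finset.image_congr (g := id) ?_ |>.trans (Finset.image_id)
            intro e he
            have := hcmin e he
            simp only [id_eq]
            omega
          rw [this, Finset.insert_erase hV0]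
      · rintro ⟨q, V'⟩ hz
        simp only [mem_sigma, mem_range, mem_filter, mem_powerset] at hz
        obtain ⟨hq, hV'r, hV'0, hV'c⟩ := hz
        set c := q + 1 with hcdef
        have hsub : ∀ y ∈ V', y < n - c := fun y hy => mem_range.1 (hV'r hy)
        set V := insert 0 (V'.image (· + c)) with hVdef
        have hcmem : c ∈ V'.image (· + c) := Finset.mem_image.2 ⟨0, hV'0, by omega⟩
        have hmemV : ∀ w, w ∈ V ↔ w = 0 ∨ ∃ w' ∈ V', w = w' + c := by
          intro w
          simp only [hVdef, Finset.mem_insert, Finset.mem_image]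
          constructor
          · rintro (rfl | ⟨w', hw', rfl⟩)
            · exact Or.inl rfl
            · exact Or.inr ⟨w', hw', rfl⟩
          · rintro (rfl | ⟨w', hw', rfl⟩)
            · exact Or.inl rfl
            · exact Or.inr ⟨w', hw', rfl⟩
        have h0nm : (0:ℕ) ∉ V'.image (· + c) := by
          intro hmem; obtain ⟨v', -, hv'⟩ := Finset.mem_image.1 hmem; omega
        -- gap at 0
        have hgap0 : gapn n V 0 = Ico 1 c := by
          ext x
          rw [mem_gapn, Finset.mem_Ico]
          constructor
          · rintro ⟨hxn, hx0, hall⟩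
            rcases hall c ((hmemV c).2 (Or.inr ⟨0, hV'0, by omega⟩)) with h | h <;> omega
          · intro hx
            refine ⟨by omega, by omega, ?_⟩
            intro w hw
            rcases (hmemV w).1 hw with rfl | ⟨w', hw', rfl⟩ <;> omega
        -- gaps at shifted points
        have hgapshift : ∀ v' ∈ V', gapn n V (v' + c) = (gapn (n - c) V' v').image (· + c) := by
          intro v' hv'
          ext x
          rw [mem_gapn]
          simp only [Finset.mem_image]
          constructor
          · rintro ⟨hxn, hvx, hall⟩
            refine ⟨x - c, mem_gapn.2 ⟨by omega, by omega, ?_⟩, by omega⟩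
            intro w' hw'
            rcases hall (w' + c) ((hmemV _).2 (Or.inr ⟨w', hw', rfl⟩)) with h | h <;> omega
          · rintro ⟨y, hy, rfl⟩
            obtain ⟨hyn, hvy, hall⟩ := mem_gapn.1 hy
            refine ⟨by omega, by omega, ?_⟩
            intro w hw
            rcases (hmemV w).1 hw with rfl | ⟨w', hw', rfl⟩
            · omega
            · rcases hall w' hw' with h | h <;> omega
        have key : ∏ v ∈ V, g (gapn n V v).card
            = g q * ∏ v ∈ V', g (gapn (n - (q+1)) V' v).card := by
          rw [hVdef, Finset.prod_insert h0nm, ← hVdef, hgap0, Nat.card_Ico]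
          have hq' : c - 1 = q := by omega
          rw [hq']
          congr 1
          rw [Finset.prod_image (fun a ha b hb hab => by omega)]
          refine Finset.prod_congr rfl fun v' hv' => ?_
          rw [hgapshift v' hv', Finset.card_image_of_injective _ (add_left_injective c)]
        exact key.symm

noncomputable def pcomp (a f : PowerSeries ℂ) : PowerSeries ℂ :=
  PowerSeries.mk fun N => ∑ k ∈ range (N + 1), coeff k a * coeff N (f ^ k)

lemma coeff_pcomp {a f : PowerSeries ℂ} {N : ℕ} :
    coeff N (pcomp a f) = ∑ k ∈ range (N + 1), coeff k a * coeff N (f ^ k) :=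
  coeff_mk _ _

lemma coeff_pow_eq_zero {f : PowerSeries ℂ} (hf : constantCoeff f = 0) {N k : ℕ}
    (h : N < k) : coeff N (f ^ k) = 0 := by
  have hdvd : (X : PowerSeries ℂ) ^ k ∣ f ^ k := pow_dvd_pow_of_dvd (X_dvd_iff.2 hf) k
  exact X_pow_dvd_iff.1 hdvd N h

lemma pcomp_stable {a f : PowerSeries ℂ} (hf : constantCoeff f = 0) {N n : ℕ}
    (hn : n ≤ N) :
    coeff n (pcomp a f) = ∑ k ∈ range (N + 1), coeff k a * coeff n (f ^ k) := by
  rw [coeff_pcomp]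
  apply Finset.sum_subset (Finset.range_subset_range.2 (by omega))
  intro k hk hk'
  rw [coeff_pow_eq_zero hf (by simp only [mem_range] at hk'; omega), mul_zero]

lemma coeff_aeval {f : PowerSeries ℂ} (hf : constantCoeff f = 0) (P : Polynomial ℂ)
    (N : ℕ) : coeff N (Polynomial.aeval f P)
      = ∑ k ∈ range (N + 1), P.coeff k * coeff N (f ^ k) := by
  rw [Polynomial.aeval_def, Polynomial.eval₂_eq_sum_range, map_sum]
  have hterm : ∀ i, coeff N (algebraMap ℂ (PowerSeries ℂ) (P.coeff i) * f ^ i)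
      = P.coeff i * coeff N (f ^ i) := by
    intro i
    rw [PowerSeries.algebraMap_apply]
    simp only [Algebra.algebraMap_self, RingHom.id_apply]
    rw [coeff_C_mul]
  rw [Finset.sum_congr rfl fun i _ => hterm i]
  set M := max P.natDegree N with hM
  have h1 : ∑ i ∈ range (P.natDegree + 1), P.coeff i * coeff N (f ^ i)
      = ∑ i ∈ range (M + 1), P.coeff i * coeff N (f ^ i) := by
    apply Finset.sum_subset (Finset.range_subset_range.2 (by omega))
    intro k hk hk'
    rw [Polynomial.coeff_eq_zero_of_natDegree_lt (by simp only [mem_range] at hk'; omega),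
      zero_mul]
  have h2 : ∑ i ∈ range (N + 1), P.coeff i * coeff N (f ^ i)
      = ∑ i ∈ range (M + 1), P.coeff i * coeff N (f ^ i) := by
    apply Finset.sum_subset (Finset.range_subset_range.2 (by omega))
    intro k hk hk'
    rw [coeff_pow_eq_zero hf (by simp only [mem_range] at hk'; omega), mul_zero]
  rw [h1, ← h2]

lemma pcomp_eq_aeval_trunc {a f : PowerSeries ℂ} (hf : constantCoeff f = 0) {N n : ℕ}
    (hn : n ≤ N) :
    coeff n (pcomp a f) = coeff n (Polynomial.aeval f (trunc (N + 1) a)) := by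
  rw [pcomp_stable hf (le_refl n), coeff_aeval hf]
  refine Finset.sum_congr rfl fun k hk => ?_
  rw [coeff_trunc, if_pos (by simp only [mem_range] at hk; omega)]

lemma pcomp_C {f : PowerSeries ℂ} (c : ℂ) : pcomp (C c) f = C c := by
  ext N
  rw [coeff_pcomp]
  rcases Nat.eq_zero_or_pos N with rfl | hN
  · simp [coeff_C]
  · have hN0 : N ≠ 0 := by omega
    rw [Finset.sum_eq_single 0]
    · simp [coeff_C, coeff_one, hN0]
    · intro k hk hk0
      simp [coeff_C, hk0]
    · intro h
      simp at h
lemma pcomp_one {f : PowerSeries ℂ} : pcomp 1 f = 1 := by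
  rw [← map_one (C (R := ℂ)), pcomp_C, map_one]

lemma pcomp_add {a b f : PowerSeries ℂ} : pcomp (a + b) f = pcomp a f + pcomp b f := by
  ext N
  simp only [coeff_pcomp, map_add, add_mul, Finset.sum_add_distrib]

lemma pcomp_mul {a b f : PowerSeries ℂ} (hf : constantCoeff f = 0) :
    pcomp (a * b) f = pcomp a f * pcomp b f := by
  ext N
  have htr : ∀ k ≤ N, (trunc (N + 1) (a * b)).coeff k
      = ((trunc (N + 1) a) * (trunc (N + 1) b)).coeff k := by
    intro k hk
    rw [coeff_trunc, if_pos (by omega), Polynomial.coeff_mul, PowerSeries.coeff_mul]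
    refine Finset.sum_congr rfl fun ij hij => ?_
    have hij' := Finset.HasAntidiagonal.mem_antidiagonal.1 hij
    rw [coeff_trunc, coeff_trunc, if_pos (by omega), if_pos (by omega)]
  have h2 : coeff N (Polynomial.aeval f (trunc (N + 1) (a * b)))
      = coeff N (Polynomial.aeval f ((trunc (N + 1) a) * (trunc (N + 1) b))) := by
    rw [coeff_aeval hf, coeff_aeval hf]
    refine Finset.sum_congr rfl fun k hk => ?_
    rw [htr k (by simp only [mem_range] at hk; omega)]
  rw [pcomp_eq_aeval_trunc hf (le_refl N), h2, map_mul, PowerSeries.coeff_mul,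
    PowerSeries.coeff_mul]
  refine Finset.sum_congr rfl fun pq hpq => ?_
  have hpq' := Finset.HasAntidiagonal.mem_antidiagonal.1 hpq
  rw [← pcomp_eq_aeval_trunc hf (show pq.1 ≤ N by omega),
    ← pcomp_eq_aeval_trunc hf (show pq.2 ≤ N by omega)]

lemma pcomp_pow {a f : PowerSeries ℂ} (hf : constantCoeff f = 0) (k : ℕ) :
    pcomp (a ^ k) f = (pcomp a f) ^ k := by
  induction k with
  | zero => simp [pcomp_one]
  | succ k ih => rw [pow_succ, pow_succ, pcomp_mul hf, ih]

lemma pcomp_X {f : PowerSeries ℂ} (hf : constantCoeff f = 0) : pcomp X f = f := by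
  ext N
  rw [coeff_pcomp]
  rcases Nat.eq_zero_or_pos N with rfl | hN
  · simp only [range_one, Finset.sum_singleton, pow_zero, coeff_zero_eq_constantCoeff]
    simp [coeff_X, hf]
  · rw [Finset.sum_eq_single 1]
    · simp [coeff_X]
    · intro k hk hk1
      simp [coeff_X, hk1]
    · intro h
      simp only [mem_range] at h
      omega

lemma pcomp_X_right {a : PowerSeries ℂ} : pcomp a X = a := by
  ext N
  rw [coeff_pcomp, Finset.sum_eq_single N]
  · simp [coeff_X_pow]
  · intro k hk hkN
    rw [coeff_X_pow, if_neg (fun h => hkN h.symm), mul_zero]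
  · intro h
    simp at h

lemma constantCoeff_pcomp {a f : PowerSeries ℂ} :
    constantCoeff (pcomp a f) = constantCoeff a := by
  rw [← coeff_zero_eq_constantCoeff, coeff_pcomp]
  simp [coeff_zero_eq_constantCoeff]

lemma pcomp_aeval {g f : PowerSeries ℂ} (hf : constantCoeff f = 0) (P : Polynomial ℂ) :
    pcomp (Polynomial.aeval g P) f = Polynomial.aeval (pcomp g f) P := by
  induction P using Polynomial.induction_on' with
  | add p q hp hq => rw [map_add, map_add, pcomp_add, hp, hq]
  | monomial n c =>
    rw [Polynomial.aeval_monomial, Polynomial.aeval_monomial, pcomp_mul hf,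
      pcomp_pow hf]
    congr 1
    exact pcomp_C _

lemma pcomp_assoc {a g f : PowerSeries ℂ} (hg : constantCoeff g = 0)
    (hf : constantCoeff f = 0) :
    pcomp (pcomp a g) f = pcomp a (pcomp g f) := by
  ext N
  have hgf : constantCoeff (pcomp g f) = 0 := by rw [constantCoeff_pcomp]; exact hg
  rw [coeff_pcomp]
  have h1 : ∀ k ∈ range (N + 1), coeff k (pcomp a g) * coeff N (f ^ k)
      = coeff k (Polynomial.aeval g (trunc (N + 1) a)) * coeff N (f ^ k) := by
    intro k hk
    rw [pcomp_eq_aeval_trunc hg (show k ≤ N by simp only [mem_range] at hk; omega)]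
  rw [Finset.sum_congr rfl h1, ← coeff_pcomp, pcomp_aeval hf,
    coeff_aeval hgf, coeff_pcomp]
  refine Finset.sum_congr rfl fun k hk => ?_
  rw [coeff_trunc, if_pos (by simp only [mem_range] at hk; omega)]

lemma coeff_pow_self {f : PowerSeries ℂ} (hf : constantCoeff f = 0) (k : ℕ) :
    coeff k (f ^ k) = (coeff 1 f) ^ k := by
  induction k with
  | zero => simp
  | succ k ih =>
    rw [pow_succ, mul_comm (f ^ k) f, PowerSeries.coeff_mul,
      Finset.Nat.sum_antidiagonal_eq_sum_range_succ_mk]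
    rw [Finset.sum_eq_single 1]
    · rw [show k + 1 - 1 = k from rfl, ih, pow_succ, mul_comm]
    · intro i hi hi1
      simp only [mem_range] at hi
      rcases Nat.eq_zero_or_pos i with rfl | hipos
      · rw [coeff_zero_eq_constantCoeff, hf, zero_mul]
      · have h2 : k + 1 - i < k := by omega
        rw [coeff_pow_eq_zero hf h2, mul_zero]
    · intro h
      simp only [mem_range] at h
      omega

lemma pcomp_injective {f : PowerSeries ℂ} (hf0 : constantCoeff f = 0)
    (hf1 : coeff 1 f = 1) {a b : PowerSeries ℂ} (h : pcomp a f = pcomp b f) : a = b := by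
  ext N
  induction N using Nat.strong_induction_on with
  | _ N ih =>
    have hN := congrArg (coeff N) h
    rw [coeff_pcomp, coeff_pcomp, Finset.sum_range_succ, Finset.sum_range_succ] at hN
    rw [coeff_pow_self hf0, hf1, one_pow, mul_one, mul_one] at hN
    have hpre : ∑ k ∈ range N, coeff k a * coeff N (f ^ k)
        = ∑ k ∈ range N, coeff k b * coeff N (f ^ k) := by
      refine Finset.sum_congr rfl fun k hk => ?_
      rw [ih k (mem_range.1 hk)]
    rw [hpre] at hN
    exact add_left_cancel hN

section main

variable (r : ℕ → ℂ)

noncomputable def TT : ℕ → ℂ := fun k => T r (range k)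
noncomputable def Mser : PowerSeries ℂ := PowerSeries.mk (TT r)
noncomputable def Bser : PowerSeries ℂ := PowerSeries.mk fun j => if j = 0 then 1 else r j
noncomputable def fser : PowerSeries ℂ := X * Mser r
noncomputable def gser : PowerSeries ℂ := X * (Bser r)⁻¹

lemma TT_zero : TT r 0 = 1 := by rw [TT, range_zero, T_empty]

lemma constantCoeff_Mser : constantCoeff (Mser r) = 1 := by
  rw [Mser, ← coeff_zero_eq_constantCoeff, coeff_mk, TT_zero]

lemma constantCoeff_Bser : constantCoeff (Bser r) = 1 := by
  rw [Bser, ← coeff_zero_eq_constantCoeff, coeff_mk, if_pos rfl]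

lemma constantCoeff_fser : constantCoeff (fser r) = 0 := by
  rw [fser, map_mul, constantCoeff_X, zero_mul]

lemma constantCoeff_gser : constantCoeff (gser r) = 0 := by
  rw [gser, map_mul, constantCoeff_X, zero_mul]

lemma coeff_one_fser : coeff 1 (fser r) = 1 := by
  rw [fser, show (1 : ℕ) = 0 + 1 from rfl, coeff_succ_X_mul, Mser, coeff_mk, TT_zero]

/-- the functional equation M = B ∘ (X·M) -/
lemma funEq : pcomp (Bser r) (fser r) = Mser r := by
  ext n
  rw [coeff_pcomp, Mser, coeff_mk]
  rcases Nat.eq_zero_or_pos n with rfl | hn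
  · rw [show (0:ℕ) + 1 = 1 from rfl, Finset.sum_range_one, pow_zero, Bser, coeff_mk,
      if_pos rfl, one_mul, coeff_zero_eq_constantCoeff, map_one, TT_zero]
  · -- LHS combinatorial expansion
    have hTrec := T_rec r n hn
    have step2 : ∀ V ∈ (range n).powerset.filter (fun V => 0 ∈ V),
        r V.card * ∏ v ∈ V, T r (gapn n V v)
        = r V.card * ∏ v ∈ V, TT r (gapn n V v).card := by
      intro V hV
      congr 1
      exact Finset.prod_congr rfl fun v _ => by rw [T_card, TT]
    rw [Finset.sum_congr rfl step2] at hTrec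
    -- fiberwise by cardinality
    have hmaps : ∀ V ∈ (range n).powerset.filter (fun V => 0 ∈ V), V.card ∈ range (n+1) := by
      intro V hV
      simp only [mem_filter, mem_powerset] at hV
      exact mem_range.2 (by have := Finset.card_le_card hV.1; simp only [card_range] at this; omega)
    rw [← Finset.sum_fiberwise_of_maps_to hmaps] at hTrec
    rw [Finset.sum_range_succ'] at hTrec
    have hzero : ∑ V ∈ ((range n).powerset.filter (fun V => 0 ∈ V)).filter
        (fun V => V.card = 0), r V.card * ∏ v ∈ V, TT r (gapn n V v).card = 0 := by
      rw [Finset.sum_eq_zero]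
      intro V hV
      simp only [mem_filter, mem_powerset, Finset.card_eq_zero] at hV
      obtain ⟨⟨-, h0⟩, rfl⟩ := hV
      simp at h0
    rw [hzero, add_zero] at hTrec
    have hfib : ∀ s : ℕ, ∑ V ∈ ((range n).powerset.filter (fun V => 0 ∈ V)).filter
          (fun V => V.card = s + 1), r V.card * ∏ v ∈ V, TT r (gapn n V v).card
        = r (s+1) * coeff n ((fser r) ^ (s + 1)) := by
      intro s
      rw [fser, Mser, ← gap_sum (TT r) s n, Finset.mul_sum, Finset.filter_filter]
      refine Finset.sum_congr rfl fun V hV => ?_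
      simp only [mem_filter, mem_powerset] at hV
      rw [hV.2.2]
    rw [Finset.sum_congr rfl fun s _ => hfib s] at hTrec
    -- RHS expansion of the pcomp sum
    rw [Finset.sum_range_succ']
    have h0term : coeff 0 (Bser r) * coeff n ((fser r) ^ 0) = 0 := by
      rw [pow_zero, coeff_one, if_neg (by omega), mul_zero]
    rw [h0term, add_zero]
    have hBk : ∀ k : ℕ, coeff (k+1) (Bser r) = r (k+1) := by
      intro k
      rw [Bser, coeff_mk, if_neg (by omega)]
    rw [Finset.sum_congr rfl fun k _ => by rw [hBk k]]
    exact hTrec.symm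

lemma gser_comp_fser : pcomp (gser r) (fser r) = X := by
  have hf0 := constantCoeff_fser r
  have hBinv : (Bser r) * (Bser r)⁻¹ = 1 :=
    PowerSeries.mul_inv_cancel _ (by rw [constantCoeff_Bser]; exact one_ne_zero)
  have hMne : constantCoeff (Mser r) ≠ 0 := by
    rw [constantCoeff_Mser]; exact one_ne_zero
  have h1 : Mser r * pcomp ((Bser r)⁻¹) (fser r) = 1 := by
    rw [← funEq r, ← pcomp_mul hf0, hBinv, pcomp_one]
  have h2 : pcomp ((Bser r)⁻¹) (fser r) = (Mser r)⁻¹ := by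
    have := congrArg (fun z => (Mser r)⁻¹ * z) h1
    simpa [← mul_assoc, PowerSeries.inv_mul_cancel _ hMne] using this
  rw [gser, pcomp_mul hf0, pcomp_X hf0, h2, fser, mul_assoc,
    PowerSeries.mul_inv_cancel _ hMne, mul_one]

lemma fser_comp_gser : pcomp (fser r) (gser r) = X := by
  apply pcomp_injective (constantCoeff_fser r) (coeff_one_fser r)
  rw [pcomp_assoc (constantCoeff_gser r) (constantCoeff_fser r), gser_comp_fser r,
    pcomp_X_right, pcomp_X (constantCoeff_fser r)]

lemma main_abstract (m : ℕ → ℂ) (hm : ∀ k, m k = TT r k) :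
    PowerSeries.mk (fun N : ℕ => ∑ k ∈ Finset.range (N + 1),
        m k * PowerSeries.coeff N
          ((PowerSeries.X *
              (PowerSeries.mk fun j : ℕ => if j = 0 then 1 else r j)⁻¹) ^ (k + 1))) =
      (PowerSeries.X : PowerSeries ℂ) := by
  have hser : PowerSeries.mk (fun N : ℕ => ∑ k ∈ Finset.range (N + 1),
        m k * PowerSeries.coeff N
          ((PowerSeries.X *
              (PowerSeries.mk fun j : ℕ => if j = 0 then 1 else r j)⁻¹) ^ (k + 1)))
      = pcomp (fser r) (gser r) := by
    ext N
    rw [coeff_mk, coeff_pcomp]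
    rw [show (X * (PowerSeries.mk fun j : ℕ => if j = 0 then 1 else r j)⁻¹) = gser r from rfl]
    rw [Finset.sum_range_succ, Finset.sum_range_succ']
    rw [coeff_pow_eq_zero (constantCoeff_gser r) (show N < N + 1 by omega), mul_zero, add_zero]
    rw [coeff_zero_eq_constantCoeff, constantCoeff_fser, zero_mul, add_zero]
    refine Finset.sum_congr rfl fun k hk => ?_
    rw [fser, coeff_succ_X_mul, Mser, coeff_mk, hm k]
  rw [hser, fser_comp_gser]

end main

end Spe2

/-- (Speicher) The `R`-transform: write the Cauchy transform of `x` as the formal Laurent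
series `G(w) = Σ_{k ≥ 0} τ(xᵏ) w^{-(k+1)}` and set `K(z) = 1/z + Σ_{k ≥ 1} R_k z^{k-1}`
with `R_k = R⁽ᵏ⁾(x, …, x)` the noncrossing cumulants of `x`.  Then `K` is the
compositional inverse of `G`:  `G(K(z)) = z`.  Writing `K(z) = B(z)/z` with
`B(z) = 1 + Σ_{k ≥ 1} R_k zᵏ ∈ ℂ[[z]]`, one has `K(z)⁻¹ = z B(z)⁻¹` and
`G(K(z)) = Σ_{k ≥ 0} τ(xᵏ) (z B(z)⁻¹)^{k+1}`, the sum converging coefficientwise (for the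
`N`-th coefficient only the terms with `k < N` contribute); the statement is the formal
power series identity `G(K(z)) = z`. -/
theorem R_transform_inverts_cauchy {A : Type*} [Ring A] [Algebra ℂ A]
    (τ : A →ₗ[ℂ] ℂ) (hτ1 : τ 1 = 1)
    (R : ∀ m : ℕ, MultilinearMap ℂ (fun _ : Fin m => A) ℂ)
    (hR : MomentCumulant τ R) (x : A) :
    PowerSeries.mk (fun N : ℕ => ∑ k ∈ Finset.range (N + 1),
        τ (x ^ k) * PowerSeries.coeff (R := ℂ) N
          ((PowerSeries.X *
              (PowerSeries.mk fun m : ℕ =>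
                if m = 0 then 1 else R m fun _ => x)⁻¹) ^ (k + 1))) =
      (PowerSeries.X : PowerSeries ℂ) := by
  classical
  set r : ℕ → ℂ := fun k => R k fun _ => x with hr
  have hm : ∀ k : ℕ, τ (x ^ k) = Spe2.TT r k := by
    intro k
    rcases Nat.eq_zero_or_pos k with rfl | hk
    · rw [pow_zero, hτ1, Spe2.TT_zero]
    · have h1 := hR k hk (fun _ => x)
      have h2 : (List.ofFn fun _ : Fin k => x).prod = x ^ k := by
        rw [List.ofFn_const, List.prod_replicate]
      rw [h2] at h1
      have h3 : ∀ π ∈ NC k, cumulantTerm R π (fun _ => x) = ∏ B ∈ π, r B.card := by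
        intro π _
        rfl
      rw [Finset.sum_congr rfl h3] at h1
      rw [h1, Spe2.NC_transfer r k]
      rfl
  exact Spe2.main_abstract r (fun k => τ (x ^ k)) hm
end

section
/- Let x₁ < y₁ < x₂ < y₂ < … < y_{k−1} < x_k be two interlacing sequences of real numbers. Then there exists a unique probability measure m on ℝ, supported on the finite set {x₁, …, x_k}, such that for every z ∈ ℂ \ ℝ, ∫_ℝ 1/(z − x) dm(x) = Π_{i=1}^{k−1}(z − y_i) / Π_{i=1}^{k}(z − x_i). Equivalently, the residues μ_i = Π_{j=1}^{k−1}(x_i − y_j) / Π_{j≠i}(x_i − x_j) satisfy μ_i > 0 for all i and Σ_{i=1}^k μ_i = 1, and m = Σ_i μ_i δ_{x_i}. -/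
/-
The weights `μᵢ` are the Lagrange coefficients of `P = ∏ⱼ (X - yⱼ)` at the nodes `xᵢ`. Since
`deg P = k < k + 1`, partial fractions give `P(z) / ∏ᵢ (z - xᵢ) = ∑ᵢ μᵢ / (z - xᵢ)`, the Cauchy
transform of `∑ᵢ μᵢ δ_{xᵢ}`, and comparing coefficients of `X ^ k` gives `∑ᵢ μᵢ = 1`. Positivity
comes from pairing the factor `xᵢ - yⱼ` with `xᵢ - x_{i.succAbove j}`: by interlacing, `yⱼ` and
the `j`-th node other than `xᵢ` lie on the same side of `xᵢ`. Conversely, a measure carried by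
the nodes has Cauchy transform `∑ᵢ m{xᵢ} / (z - xᵢ)`, and partial-fraction coefficients are
determined by the values at the infinitely many non-real points, so `m{xᵢ} = μᵢ`.
-/

open MeasureTheory
open scoped Classical

/-- `m` is the transition measure of the interlacing data `x₀ < y₀ < x₁ < … < y_{k-1} < x_k`:
a probability measure on `ℝ` supported on `{x₀, …, x_k}` whose Cauchy transform is
`Π_i (z - y_i) / Π_i (z - x_i)` for all non-real `z`. -/
def IsTransitionMeasure (k : ℕ) (x : Fin (k + 1) → ℝ) (y : Fin k → ℝ)
    (m : Measure ℝ) : Prop :=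
  IsProbabilityMeasure m ∧ m {t : ℝ | ∀ i, t ≠ x i} = 0 ∧
    ∀ z : ℂ, z.im ≠ 0 →
      ∫ t : ℝ, (z - (t : ℂ))⁻¹ ∂m =
        (∏ i : Fin k, (z - (y i : ℂ))) / ∏ i : Fin (k + 1), (z - (x i : ℂ))

open Finset Polynomial

theorem Fin.prod_univ_erase_eq_prod_succAbove {M : Type*} [CommMonoid M] {k : ℕ}
    (f : Fin (k + 1) → M) (i : Fin (k + 1)) :
    ∏ j ∈ univ.erase i, f j = ∏ j : Fin k, f (i.succAbove j) := by
  rw [Fin.univ_succAbove k i, erase_cons, prod_map]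
  rfl

namespace Lagrange

theorem degree_nodal_univ_lt {R : Type*} [CommRing R] [Nontrivial R] {k : ℕ}
    (v : Fin k → R) : (nodal univ v).degree < #(univ : Finset (Fin (k + 1))) := by
  simp only [degree_nodal, card_univ, Fintype.card_fin]
  exact_mod_cast k.lt_succ_self

variable {F ι : Type*} [Field F] [DecidableEq ι] {s : Finset ι} {v : ι → F}

theorem eval_div_eval_nodal_eq_sum (hvs : Set.InjOn v s) {P : F[X]} (hP : P.degree < #s)
    {z : F} (hz : ∀ i ∈ s, z ≠ v i) :
    P.eval z / (nodal s v).eval z =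
      ∑ i ∈ s, P.eval (v i) / (∏ j ∈ s.erase i, (v i - v j)) * (z - v i)⁻¹ := by
  conv_lhs => rw [eq_interpolate hvs hP]
  rw [eval_interpolate_not_at_node _ hz, mul_div_cancel_left₀ _ (eval_nodal_not_at_node hz)]
  refine sum_congr rfl fun i _ => ?_
  rw [nodalWeight, prod_inv_distrib]
  ring

theorem eq_of_forall_sum_mul_inv_sub_eq (hvs : Set.InjOn v s) {S : Set F} (hS : S.Infinite)
    (hSv : ∀ z ∈ S, ∀ i ∈ s, z ≠ v i) {c d : ι → F}
    (h : ∀ z ∈ S, ∑ i ∈ s, c i * (z - v i)⁻¹ = ∑ i ∈ s, d i * (z - v i)⁻¹) :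
    ∀ i ∈ s, c i = d i := by
  -- the interpolant of `r` is `nodal s v * ∑ i ∈ s, (c i - d i) * (z - v i)⁻¹`, zero on `S`
  set r : ι → F := fun i => (c i - d i) / nodalWeight s v i
  have hr : interpolate s v r = 0 := by
    refine eq_zero_of_infinite_isRoot _ (hS.mono fun z hz => ?_)
    rw [Set.mem_ofPred_eq, IsRoot, eval_interpolate_not_at_node _ (hSv z hz), mul_eq_zero]
    right
    rw [← sub_eq_zero.mpr (h z hz), ← sum_sub_distrib]
    refine sum_congr rfl fun i hi => ?_
    simp only [r]
    field_simp [nodalWeight_ne_zero hvs hi]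
  intro i hi
  have hri : r i = 0 := by rw [← eval_interpolate_at_node r hvs hi, hr, eval_zero]
  simpa [r, nodalWeight_ne_zero hvs hi, sub_eq_zero] using hri

end Lagrange

theorem Complex.ofReal_ne_of_im_ne_zero {z : ℂ} (hz : z.im ≠ 0) (t : ℝ) : z ≠ t := by
  rintro rfl
  exact hz (Complex.ofReal_im t)

theorem Complex.infinite_setOf_im_ne_zero : {z : ℂ | z.im ≠ 0}.Infinite :=
  infinite_of_mem_nhds I <| (isOpen_ne_fun continuous_im continuous_const).mem_nhds (by simp)

theorem MeasureTheory.integral_finsetSum_ofReal_smul_dirac {α ι E : Type*} [MeasurableSpace α]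
    [MeasurableSingletonClass α] [Fintype ι] [NormedAddCommGroup E] [NormedSpace ℝ E]
    [FiniteDimensional ℝ E] {c : ι → ℝ} (hc : ∀ i, 0 ≤ c i) (a : ι → α) (f : α → E) :
    ∫ t, f t ∂(∑ i, ENNReal.ofReal (c i) • Measure.dirac (a i)) = ∑ i, c i • f (a i) := by
  rw [← Measure.sum_fintype, integral_sum_dirac fun _ => ENNReal.ofReal_ne_top, tsum_fintype]
  simp only [ENNReal.toReal_ofReal (hc _)]

theorem MeasureTheory.Measure.eq_sum_ofReal_smul_dirac {α ι : Type*} [MeasurableSpace α]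
    [MeasurableSingletonClass α] [Fintype ι] {a : ι → α} (ha : Function.Injective a)
    (m : Measure α) [IsFiniteMeasure m] (h : ∀ᵐ t ∂m, t ∈ Set.range a) :
    m = ∑ i, ENNReal.ofReal (m.real {a i}) • Measure.dirac (a i) := by
  have h' : ∀ᵐ t ∂m, t ∈ univ.image a := by simpa using h
  rw [ae_mem_finset_iff, sum_image fun i _ j _ hij => ha hij] at h'
  refine h'.trans (Finset.sum_congr rfl fun i _ => ?_)
  rw [ofReal_measureReal]

section Interlacing

variable {k : ℕ} {x : Fin (k + 1) → ℝ} {y : Fin k → ℝ}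

def Interlacing (x : Fin (k + 1) → ℝ) (y : Fin k → ℝ) : Prop :=
  ∀ i : Fin k, x i.castSucc < y i ∧ y i < x i.succ

noncomputable def transitionWeight (x : Fin (k + 1) → ℝ) (y : Fin k → ℝ) (i : Fin (k + 1)) : ℝ :=
  (∏ j, (x i - y j)) / ∏ j ∈ univ.erase i, (x i - x j)

noncomputable def transitionMeasure (x : Fin (k + 1) → ℝ) (y : Fin k → ℝ) : Measure ℝ :=
  ∑ i, ENNReal.ofReal (transitionWeight x y i) • Measure.dirac (x i)

theorem Interlacing.strictMono (h : Interlacing x y) : StrictMono x :=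
  Fin.strictMono_iff_lt_succ.mpr fun i => (h i).1.trans (h i).2

theorem Interlacing.sub_mul_sub_succAbove_pos (h : Interlacing x y) (i : Fin (k + 1))
    (j : Fin k) : 0 < (x i - y j) * (x i - x (i.succAbove j)) := by
  have hmono := h.strictMono.monotone
  rcases lt_or_ge j.castSucc i with hji | hij
  · rw [Fin.succAbove_of_castSucc_lt _ _ hji]
    have hyx : y j < x i := (h j).2.trans_le (hmono (Fin.castSucc_lt_iff_succ_le.mp hji))
    exact mul_pos (sub_pos.mpr hyx) (sub_pos.mpr (h.strictMono hji))
  · rw [Fin.succAbove_of_le_castSucc _ _ hij]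
    have hxy : x i < y j := (hmono hij).trans_lt (h j).1
    exact mul_pos_of_neg_of_neg (sub_neg.mpr hxy) (sub_neg.mpr (hxy.trans (h j).2))

theorem Interlacing.transitionWeight_pos (h : Interlacing x y) (i : Fin (k + 1)) :
    0 < transitionWeight x y i := by
  refine div_pos_iff.mpr (mul_pos_iff.mp ?_)
  rw [Fin.prod_univ_erase_eq_prod_succAbove (fun j => x i - x j), ← prod_mul_distrib]
  exact prod_pos fun j _ => h.sub_mul_sub_succAbove_pos i j

theorem sum_transitionWeight (y : Fin k → ℝ) (hx : Function.Injective x) :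
    ∑ i, transitionWeight x y i = 1 := by
  have hdeg := Lagrange.degree_nodal_univ_lt y
  have hcoeff := Lagrange.coeff_eq_sum hx.injOn hdeg
  simp only [card_univ, Fintype.card_fin, add_tsub_cancel_right, Lagrange.eval_nodal] at hcoeff
  unfold transitionWeight
  have hmonic := (Lagrange.nodal_monic (s := univ) (v := y)).coeff_natDegree
  rwa [Lagrange.natDegree_nodal, card_univ, Fintype.card_fin, hcoeff] at hmonic

theorem prod_sub_div_prod_sub_eq_sum_transitionWeight (y : Fin k → ℝ)
    (hx : Function.Injective x) {z : ℂ} (hz : ∀ i, z ≠ x i) :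
    (∏ i, (z - (y i : ℂ))) / ∏ i, (z - (x i : ℂ)) =
      ∑ i, (transitionWeight x y i : ℂ) * (z - x i)⁻¹ := by
  have hdeg := Lagrange.degree_nodal_univ_lt fun j => (y j : ℂ)
  have hxC : Set.InjOn (fun i => (x i : ℂ)) (univ : Finset (Fin (k + 1))) :=
    (Complex.ofReal_injective.comp hx).injOn
  have hpf := Lagrange.eval_div_eval_nodal_eq_sum hxC hdeg fun i _ => hz i
  simp only [Lagrange.eval_nodal] at hpf
  rw [hpf]
  push_cast [transitionWeight]
  rfl

theorem Interlacing.isTransitionMeasure_transitionMeasure (h : Interlacing x y) :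
    IsTransitionMeasure k x y (transitionMeasure x y) := by
  have hpos i := (h.transitionWeight_pos i).le
  refine ⟨⟨?_⟩, ?_, fun z hz => ?_⟩
  · simp [transitionMeasure, ← ENNReal.ofReal_sum_of_nonneg fun i _ => hpos i,
      sum_transitionWeight y h.strictMono.injective]
  · simp [transitionMeasure, Measure.dirac_apply]
  · rw [transitionMeasure, integral_finsetSum_ofReal_smul_dirac hpos,
      prod_sub_div_prod_sub_eq_sum_transitionWeight y h.strictMono.injective
        fun i => Complex.ofReal_ne_of_im_ne_zero hz (x i)]
    simp only [Complex.real_smul]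

theorem IsTransitionMeasure.eq_transitionMeasure (hx : Function.Injective x) {m : Measure ℝ}
    (hm : IsTransitionMeasure k x y m) : m = transitionMeasure x y := by
  obtain ⟨hprob, hsupp, hcauchy⟩ := hm
  have hm_eq := m.eq_sum_ofReal_smul_dirac hx (by simpa [ae_iff, eq_comm] using hsupp)
  have hxC : Set.InjOn (fun i => (x i : ℂ)) (univ : Finset (Fin (k + 1))) :=
    (Complex.ofReal_injective.comp hx).injOn
  have hcoeffs : ∀ z ∈ {z : ℂ | z.im ≠ 0}, ∑ i, (m.real {x i} : ℂ) * (z - x i)⁻¹ =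
      ∑ i, (transitionWeight x y i : ℂ) * (z - x i)⁻¹ := by
    intro z hz
    rw [← prod_sub_div_prod_sub_eq_sum_transitionWeight y hx
      fun i => Complex.ofReal_ne_of_im_ne_zero hz (x i), ← hcauchy z hz]
    conv_rhs => rw [hm_eq]
    rw [integral_finsetSum_ofReal_smul_dirac fun i => measureReal_nonneg]
    simp only [Complex.real_smul]
  have hweight : ∀ i, m.real {x i} = transitionWeight x y i := fun i => by
    exact_mod_cast Lagrange.eq_of_forall_sum_mul_inv_sub_eq hxC Complex.infinite_setOf_im_ne_zero
      (fun z hz i _ => Complex.ofReal_ne_of_im_ne_zero hz (x i)) hcoeffs i (mem_univ i)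
  rw [hm_eq, transitionMeasure]
  simp only [hweight]

end Interlacing

/-- Given interlacing sequences `x₀ < y₀ < x₁ < y₁ < … < y_{k-1} < x_k`, there exists a
unique probability measure `m` on `ℝ`, supported on `{x₀, …, x_k}`, whose Cauchy
transform equals `Π_{i}(z - y_i) / Π_{i}(z - x_i)` for all `z ∈ ℂ \ ℝ`.  Equivalently,
the residues `μ_i = Π_j (x_i - y_j) / Π_{j ≠ i} (x_i - x_j)` are positive, sum to `1`,
and `m = Σ_i μ_i δ_{x_i}`. -/
theorem transition_measure_exists_unique (k : ℕ) (x : Fin (k + 1) → ℝ) (y : Fin k → ℝ)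
    (hinter : ∀ i : Fin k, x i.castSucc < y i ∧ y i < x i.succ) :
    (∀ i : Fin (k + 1),
        0 < (∏ j : Fin k, (x i - y j)) / ∏ j ∈ Finset.univ.erase i, (x i - x j)) ∧
      (∑ i : Fin (k + 1),
          (∏ j : Fin k, (x i - y j)) / ∏ j ∈ Finset.univ.erase i, (x i - x j)) = 1 ∧
      (∃! m : Measure ℝ, IsTransitionMeasure k x y m) ∧
      IsTransitionMeasure k x y
        (∑ i : Fin (k + 1),
          ENNReal.ofReal
              ((∏ j : Fin k, (x i - y j)) / ∏ j ∈ Finset.univ.erase i, (x i - x j)) •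
            Measure.dirac (x i)) := by
  have hx := (Interlacing.strictMono hinter).injective
  have hM := Interlacing.isTransitionMeasure_transitionMeasure hinter
  exact ⟨Interlacing.transitionWeight_pos hinter, sum_transitionWeight y hx,
    ⟨_, hM, fun m hm => hm.eq_transitionMeasure hx⟩, hM⟩
end

section
/- Let (A, τ) be a noncommutative probability space and let p, q ∈ A be free idempotents (p² = p, q² = q) with τ(p) = τ(q) = 1/2. Then for every n ≥ 1, τ((p + q)ⁿ) = ∫₀² xⁿ · (1/(π√(x(2 − x)))) dx. That is, the distribution of the sum of two free projections of trace 1/2 is the arcsine-type law with density 1/(π√(x(2 − x))) on the interval (0, 2). -/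
open scoped Classical

/-- A family `{A_i ; i ∈ I}` of unital subalgebras of `A` is *free* with respect to the
linear functional `τ` if whenever `a₁, …, a_k` are centered (`τ (a j) = 0`) and each
`a_j` lies in some `A_{i_j}` with consecutive indices distinct, then `τ (a₁ ⋯ a_k) = 0`. -/
def IsFreeFamily {A : Type*} [Ring A] [Algebra ℂ A] {ι : Type*}
    (τ : A →ₗ[ℂ] ℂ) (Alg : ι → Subalgebra ℂ A) : Prop :=
  ∀ (k : ℕ) (idx : Fin (k + 1) → ι) (a : Fin (k + 1) → A),
    (∀ j, a j ∈ Alg (idx j)) →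
    (∀ j : Fin k, idx j.castSucc ≠ idx j.succ) →
    (∀ j, τ (a j) = 0) →
    τ (List.ofFn a).prod = 0

/-! Write `a = 2p - 1` and `b = 2q - 1`: these are centered free symmetries (`a² = b² = 1`), and
`p + q = 1 + (a + b) / 2`. The element `u = ab` is invertible with `u⁻¹ = ba`, and every integer
power of `u`, as well as `a uⁿ` and `b uⁿ`, reduces to an alternating word in `a, b`; freeness thus
makes `u` a Haar unitary: `τ(uⁿ) = δ_{n,0}`. Since `(a + b)² = u⁻¹(1 + u)²`, the binomial
theorem gives `τ((a + b)^(2k)) = C(2k, k)` and `τ((a + b)^(2k+1)) = 0`. On the other side the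
substitution `x = 1 + cos θ` turns the integral into `π⁻¹ ∫₀^π (1 + cos θ)ⁿ dθ`, and the Wallis
integrals `∫₀^π cos^m θ dθ = π C(m, m/2) / 2^m` (`m` even) produce the same binomial sum. -/

open Finset Real MeasureTheory

/-- The moments of the arcsine law on `[-2, 2]`. -/
def arcsineMoment (m : ℕ) : ℕ := if Even m then (m / 2).centralBinom else 0

@[simp]
lemma arcsineMoment_two_mul (k : ℕ) : arcsineMoment (2 * k) = k.centralBinom := by
  simp [arcsineMoment]

@[simp]
lemma arcsineMoment_two_mul_add_one (k : ℕ) : arcsineMoment (2 * k + 1) = 0 := by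
  simp [arcsineMoment]

lemma add_two_mul_arcsineMoment_add_two (m : ℕ) :
    (m + 2) * arcsineMoment (m + 2) = 4 * (m + 1) * arcsineMoment m := by
  obtain ⟨k, rfl | rfl⟩ := Nat.even_or_odd' m
  · rw [show 2 * k + 2 = 2 * (k + 1) by ring, arcsineMoment_two_mul, arcsineMoment_two_mul]
    linear_combination 2 * Nat.succ_mul_centralBinom_succ k
  · rw [show 2 * k + 1 + 2 = 2 * (k + 1) + 1 by ring]
    simp

lemma integral_cos_pow_eq_arcsineMoment (m : ℕ) :
    ∫ θ in 0..π, cos θ ^ m = π * arcsineMoment m / 2 ^ m := by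
  induction m using Nat.twoStepInduction with
  | zero => simp [arcsineMoment]
  | one => simp [arcsineMoment]
  | more m ih _ =>
    have hrec : ((m : ℝ) + 2) * arcsineMoment (m + 2) = 4 * (m + 1) * arcsineMoment m := by
      exact_mod_cast add_two_mul_arcsineMoment_add_two m
    rw [integral_cos_pow, ih, sin_pi, sin_zero]
    simp only [mul_zero, sub_zero, zero_div, zero_add]
    rw [div_mul_div_comm, div_eq_div_iff (by positivity) (by positivity)]
    linear_combination (-π * 2 ^ m) * hrec

lemma integral_div_sqrt_one_sub_sq (g : ℝ → ℝ) :
    ∫ y in -1..1, g y / √(1 - y ^ 2) = ∫ θ in 0..π, g (cos θ) := by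
  have himage : cos '' Set.Ioo 0 π = Set.Ioo (-1) 1 := cosPartialHomeomorph.image_source_eq_target
  rw [intervalIntegral.integral_of_le (by norm_num), integral_Ioc_eq_integral_Ioo,
    intervalIntegral.integral_of_le pi_pos.le, integral_Ioc_eq_integral_Ioo, ← himage,
    integral_image_eq_integral_abs_deriv_smul measurableSet_Ioo
      (fun θ _ => (hasDerivAt_cos θ).hasDerivWithinAt) (injOn_cos.mono Set.Ioo_subset_Icc_self)]
  refine setIntegral_congr_fun measurableSet_Ioo fun θ hθ => ?_
  have hsin : 0 < sin θ := sin_pos_of_pos_of_lt_pi hθ.1 hθ.2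
  simp only [smul_eq_mul, abs_neg, abs_of_pos hsin, ← sin_sq, sqrt_sq hsin.le]
  field_simp

lemma integral_div_sqrt_mul_two_sub (f : ℝ → ℝ) :
    ∫ x in 0..2, f x / √(x * (2 - x)) = ∫ θ in 0..π, f (1 + cos θ) := by
  have hshift := intervalIntegral.integral_comp_add_left (fun x => f x / √(x * (2 - x))) 1
    (a := -1) (b := 1)
  norm_num at hshift
  rw [← integral_div_sqrt_one_sub_sq (fun y => f (1 + y)), ← hshift]
  refine intervalIntegral.integral_congr fun y _ => ?_
  ring_nf

lemma integral_pow_mul_arcsine_density (n : ℕ) :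
    ∫ x in 0..2, x ^ n * (1 / (π * √(x * (2 - x)))) =
      ∑ m ∈ range (n + 1), n.choose m * (1 / 2 : ℝ) ^ m * arcsineMoment m := by
  calc ∫ x in 0..2, x ^ n * (1 / (π * √(x * (2 - x))))
      = ∫ x in 0..2, x ^ n / π / √(x * (2 - x)) := by
        congr 1 with x; rw [div_div, mul_one_div]
    _ = π⁻¹ * ∫ θ in 0..π, (1 + cos θ) ^ n := by
        rw [integral_div_sqrt_mul_two_sub, ← intervalIntegral.integral_const_mul]
        congr 1 with θ; ring
    _ = _ := by
        simp_rw [add_comm (1 : ℝ), add_pow, one_pow, mul_one]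
        rw [intervalIntegral.integral_finsetSum
          fun m _ => (by fun_prop : Continuous _).intervalIntegrable _ _, mul_sum]
        refine sum_congr rfl fun m _ => ?_
        rw [intervalIntegral.integral_mul_const, integral_cos_pow_eq_arcsineMoment, one_div,
          inv_pow]
        field_simp

section FreeSymmetries

variable {A : Type*} [Ring A]

def alternatingWord (a b : A) (n : ℕ) : A :=
  (List.ofFn fun j : Fin n => if Even (j : ℕ) then a else b).prod

lemma alternatingWord_succ (a b : A) (n : ℕ) :
    alternatingWord a b (n + 1) = alternatingWord a b n * if Even n then a else b := by
  simp only [alternatingWord, List.ofFn_succ', List.prod_concat, Fin.val_castSucc, Fin.val_last]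

lemma alternatingWord_two_mul (a b : A) (m : ℕ) : alternatingWord a b (2 * m) = (a * b) ^ m := by
  induction m with
  | zero => simp [alternatingWord]
  | succ m ih =>
    rw [show 2 * (m + 1) = 2 * m + 1 + 1 by ring, alternatingWord_succ, alternatingWord_succ, ih]
    simp [pow_succ, mul_assoc]

lemma alternatingWord_two_mul_add_one (a b : A) (m : ℕ) :
    alternatingWord a b (2 * m + 1) = (a * b) ^ m * a := by
  simp [alternatingWord_succ, alternatingWord_two_mul]

lemma two_mul_sub_one_mul_self {p : A} (hp : p * p = p) : (2 * p - 1) * (2 * p - 1) = 1 := by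
  simp only [two_mul, sub_mul, mul_sub, add_mul, mul_add, hp, one_mul, mul_one]
  abel

def mulUnitOfInvolutions {a b : A} (ha : a * a = 1) (hb : b * b = 1) : Aˣ where
  val := a * b
  inv := b * a
  val_inv := by rw [mul_assoc, ← mul_assoc b, hb, one_mul, ha]
  inv_val := by rw [mul_assoc, ← mul_assoc a, ha, one_mul, hb]

section mulUnitOfInvolutions

variable {a b : A} (ha : a * a = 1) (hb : b * b = 1)

@[simp]
lemma val_mulUnitOfInvolutions : (mulUnitOfInvolutions ha hb : A) = a * b :=
  rfl

lemma inv_mulUnitOfInvolutions : (mulUnitOfInvolutions ha hb)⁻¹ = mulUnitOfInvolutions hb ha :=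
  rfl

lemma add_sq_eq_inv_mul_add_one_sq :
    (a + b) ^ 2 = ↑(mulUnitOfInvolutions ha hb)⁻¹ * (↑(mulUnitOfInvolutions ha hb) + 1) ^ 2 := by
  set u := mulUnitOfInvolutions ha hb
  calc (a + b) ^ 2 = ↑u⁻¹ + 2 + ↑u := by
        simp only [u, sq, add_mul, mul_add, ha, hb, inv_mulUnitOfInvolutions,
          val_mulUnitOfInvolutions, ← one_add_one_eq_two (R := A)]
        abel
    _ = ↑u⁻¹ * (↑u + 1) ^ 2 := by
        simp only [sq, mul_add, add_mul, mul_one, one_mul, ← mul_assoc, Units.inv_mul]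
        rw [← one_add_one_eq_two (R := A)]
        abel

lemma add_pow_two_mul_eq_sum (k : ℕ) :
    (a + b) ^ (2 * k) = ∑ j ∈ range (2 * k + 1),
      (2 * k).choose j • (↑(mulUnitOfInvolutions ha hb ^ ((j : ℤ) - k)) : A) := by
  set u := mulUnitOfInvolutions ha hb
  have hcomm : Commute (↑u⁻¹ : A) (↑u + 1) :=
    ((Commute.refl u).inv_left.units_val).add_right (Commute.one_right _)
  rw [pow_mul, add_sq_eq_inv_mul_add_one_sq ha hb, (hcomm.pow_right 2).mul_pow, ← pow_mul,
    (Commute.one_right _).add_pow, mul_sum]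
  refine sum_congr rfl fun j _ => ?_
  rw [one_pow, mul_one, ← mul_assoc, nsmul_eq_mul, ← (Nat.cast_commute _ _).eq,
    ← Units.val_pow_eq_pow_val, ← Units.val_pow_eq_pow_val, ← Units.val_mul, sub_eq_neg_add,
    zpow_add, zpow_neg, zpow_natCast, zpow_natCast, inv_pow]

end mulUnitOfInvolutions

variable [Algebra ℂ A]

lemma LinearMap.map_one_add_smul_pow (τ : A →ₗ[ℂ] ℂ) (c : ℂ) (s : A) (n : ℕ) :
    τ ((1 + c • s) ^ n) = ∑ m ∈ Finset.range (n + 1), n.choose m * c ^ m * τ (s ^ m) := by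
  rw [add_comm, (Commute.one_right _).add_pow, map_sum]
  refine sum_congr rfl fun m _ => ?_
  rw [one_pow, mul_one, ← Nat.cast_comm, ← nsmul_eq_mul, map_nsmul, smul_pow, map_smul,
    nsmul_eq_mul, smul_eq_mul, mul_assoc]

def VanishesOnAlternatingWords (τ : A →ₗ[ℂ] ℂ) (a b : A) : Prop :=
  ∀ n, τ (alternatingWord a b (n + 1)) = 0

lemma IsFreeFamily.vanishesOnAlternatingWords {τ : A →ₗ[ℂ] ℂ} {ι : Type*}
    {Alg : ι → Subalgebra ℂ A} (hfree : IsFreeFamily τ Alg) {i j : ι} (hij : i ≠ j) {a b : A}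
    (ha : a ∈ Alg i) (hb : b ∈ Alg j) (hτa : τ a = 0) (hτb : τ b = 0) :
    VanishesOnAlternatingWords τ a b := fun n ↦ by
  refine hfree n (fun k => if Even (k : ℕ) then i else j) _ (fun k => ?_) (fun k => ?_)
    (fun k => ?_)
  · split <;> assumption
  · by_cases hk : Even (k : ℕ) <;> simp [hk, Nat.even_add_one, hij, hij.symm]
  · split <;> assumption

namespace VanishesOnAlternatingWords

variable {τ : A →ₗ[ℂ] ℂ} {a b : A}

lemma map_mul_pow_succ (h : VanishesOnAlternatingWords τ a b) (m : ℕ) :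
    τ ((a * b) ^ (m + 1)) = 0 := by
  simpa [← alternatingWord_two_mul, mul_add] using h (2 * m + 1)

lemma map_mul_pow_mul (h : VanishesOnAlternatingWords τ a b) (m : ℕ) :
    τ ((a * b) ^ m * a) = 0 := by
  simpa [← alternatingWord_two_mul_add_one] using h (2 * m)

lemma map_zpow_mulUnitOfInvolutions (hab : VanishesOnAlternatingWords τ a b)
    (hba : VanishesOnAlternatingWords τ b a) (ha : a * a = 1) (hb : b * b = 1)
    (hτ1 : τ 1 = 1) (n : ℤ) :
    τ ↑(mulUnitOfInvolutions ha hb ^ n) = if n = 0 then 1 else 0 := by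
  rcases n with (_ | m) | m
  · simp [hτ1]
  · rw [Int.ofNat_eq_natCast, zpow_natCast, if_neg (by omega)]
    simpa using hab.map_mul_pow_succ m
  · simpa [zpow_negSucc, ← inv_pow, inv_mulUnitOfInvolutions] using hba.map_mul_pow_succ m

lemma map_mul_zpow_mulUnitOfInvolutions (hab : VanishesOnAlternatingWords τ a b)
    (hba : VanishesOnAlternatingWords τ b a) (ha : a * a = 1) (hb : b * b = 1) (n : ℤ) :
    τ (a * ↑(mulUnitOfInvolutions ha hb ^ n)) = 0 := by
  rcases n with (_ | m) | m
  · simpa [alternatingWord] using hab 0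
  · rw [Int.ofNat_eq_natCast, zpow_natCast]
    simpa [pow_succ', ← mul_assoc, ha, ← mul_pow_mul] using hba.map_mul_pow_mul m
  · simpa [zpow_negSucc, ← inv_pow, inv_mulUnitOfInvolutions, ← mul_pow_mul]
      using hab.map_mul_pow_mul (m + 1)

lemma map_add_mul_zpow_mulUnitOfInvolutions (hab : VanishesOnAlternatingWords τ a b)
    (hba : VanishesOnAlternatingWords τ b a) (ha : a * a = 1) (hb : b * b = 1)
    (n : ℤ) :
    τ ((a + b) * ↑(mulUnitOfInvolutions ha hb ^ n)) = 0 := by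
  -- `u⁻¹` is the unit built from `(b, a)`, so the `b`-term is the `a`-term for the swapped pair.
  have hb' := map_mul_zpow_mulUnitOfInvolutions hba hab hb ha (-n)
  rw [← inv_zpow', inv_mulUnitOfInvolutions] at hb'
  rw [add_mul, map_add, map_mul_zpow_mulUnitOfInvolutions hab hba, hb', add_zero]

lemma map_add_pow (hab : VanishesOnAlternatingWords τ a b)
    (hba : VanishesOnAlternatingWords τ b a) (ha : a * a = 1) (hb : b * b = 1)
    (hτ1 : τ 1 = 1) (m : ℕ) : τ ((a + b) ^ m) = arcsineMoment m := by
  obtain ⟨k, rfl | rfl⟩ := Nat.even_or_odd' m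
  · rw [add_pow_two_mul_eq_sum ha hb, map_sum, sum_eq_single k]
    · rw [map_nsmul, map_zpow_mulUnitOfInvolutions hab hba ha hb hτ1, if_pos (sub_self _),
        nsmul_eq_mul, mul_one, arcsineMoment_two_mul, Nat.centralBinom_eq_two_mul_choose]
    · intro j _ hj
      rw [map_nsmul, map_zpow_mulUnitOfInvolutions hab hba ha hb hτ1, if_neg (by omega), smul_zero]
    · intro hk
      exact absurd (Finset.mem_range.2 (by omega)) hk
  · rw [arcsineMoment_two_mul_add_one, Nat.cast_zero, pow_succ', add_pow_two_mul_eq_sum ha hb,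
      mul_sum, map_sum]
    refine sum_eq_zero fun j _ => ?_
    rw [mul_smul_comm, map_nsmul, map_add_mul_zpow_mulUnitOfInvolutions hab hba ha hb, smul_zero]

end VanishesOnAlternatingWords

end FreeSymmetries

/-- The sum of two free idempotents `p, q` with `τ p = τ q = 1/2` has the arcsine-type
distribution with density `1/(π √(x(2 - x)))` on `(0, 2)`:
`τ((p + q)ⁿ) = ∫₀² xⁿ / (π √(x(2 - x))) dx` for all `n ≥ 1`. -/
theorem free_projections_sum_arcsine {A : Type*} [Ring A] [Algebra ℂ A]
    (τ : A →ₗ[ℂ] ℂ) (hτ1 : τ 1 = 1)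
    (p q : A) (hp : p * p = p) (hq : q * q = q)
    (hτp : τ p = 1 / 2) (hτq : τ q = 1 / 2)
    (hfree : IsFreeFamily τ ![Algebra.adjoin ℂ {p}, Algebra.adjoin ℂ {q}]) :
    ∀ n : ℕ, 0 < n →
      τ ((p + q) ^ n) =
        ((∫ x in (0:ℝ)..2, x ^ n * (1 / (Real.pi * Real.sqrt (x * (2 - x))))) : ℝ) := by
  intro n _
  set a := 2 * p - 1
  set b := 2 * q - 1
  have hpq : p + q = 1 + (1 / 2 : ℂ) • (a + b) := by simp only [a, b, two_mul]; module
  have ha : a ∈ Algebra.adjoin ℂ {p} :=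
    sub_mem (mul_mem (ofNat_mem _ 2) (Algebra.self_mem_adjoin_singleton ℂ p)) (one_mem _)
  have hb : b ∈ Algebra.adjoin ℂ {q} :=
    sub_mem (mul_mem (ofNat_mem _ 2) (Algebra.self_mem_adjoin_singleton ℂ q)) (one_mem _)
  have hτa : τ a = 0 := by rw [map_sub, two_mul, map_add, hτp, hτ1]; norm_num
  have hτb : τ b = 0 := by rw [map_sub, two_mul, map_add, hτq, hτ1]; norm_num
  have hab := hfree.vanishesOnAlternatingWords (i := 0) (j := 1) (by decide) ha hb hτa hτb
  have hba := hfree.vanishesOnAlternatingWords (i := 1) (j := 0) (by decide) hb ha hτb hτa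
  rw [hpq, τ.map_one_add_smul_pow, integral_pow_mul_arcsine_density]
  push_cast
  refine sum_congr rfl fun m _ => ?_
  rw [hab.map_add_pow hba (two_mul_sub_one_mul_self hp) (two_mul_sub_one_mul_self hq) hτ1]
end
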